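/- arXiv:2303.06717 — 7 statements merged into one kernel-verified Lean document; each statement's English description precedes it below -/
import Mathlib

section
/- For every n ∈ ℤ⁺, the number of tilings of [1,n] by tiles of size α equals the number of tilings of [1,n] by tiles of size n/α whenever α divides n; more precisely, there is a bijection between {(A,B) : A+B = [1,n], |A| = α, |B| = n/α, 0 ∈ B, min B ≥ 0} and {(A,B) : A+B = [1,n], |A| = n/α, |B| = α, 0 ∈ B, min B ≥ 0}. -/
open Finset Pointwise

/-- A canonical tiling of `[1,n]` with tile size `α`. -/
def CanTiling (n α : ℕ) (p : Finset ℤ × Finset ℤ) : Prop :=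
  p.1 + p.2 = Finset.Icc 1 (n : ℤ) ∧ p.1.card = α ∧ p.2.card = n / α ∧
    (0 : ℤ) ∈ p.2 ∧ ∀ b ∈ p.2, 0 ≤ b

/-!
Translating both tiles of a tiling `A + B = [1, n]` in opposite directions does not change
their sum, so `(A, B) ↦ (1 + B, A - 1)` maps tilings to tilings and is its own inverse. The
normalisation `min B = 0` passes to the new second tile `A - 1` because `0 ∈ B` forces
`A ⊆ [1, n]`, while `1 ∈ A` since `1` can only be written as `1 + 0`.
-/

section SwapShift

variable {G : Type*} [DecidableEq G]

def swapShift [AddGroup G] (c : G) (p : Finset G × Finset G) : Finset G × Finset G :=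
  (c +ᵥ p.2, -c +ᵥ p.1)

theorem swapShift_involutive [AddGroup G] (c : G) : Function.Involutive (swapShift c) :=
  fun p => Prod.ext (vadd_neg_vadd c p.1) (neg_vadd_vadd c p.2)

theorem swapShift_fst_add_snd [AddCommGroup G] (c : G) (p : Finset G × Finset G) :
    (swapShift c p).1 + (swapShift c p).2 = p.1 + p.2 := by
  rw [swapShift, vadd_add_vadd_comm, add_neg_cancel, zero_vadd, add_comm]

end SwapShift

section IntervalTiling

variable {A B : Finset ℤ} {n : ℤ}

theorem one_le_of_add_eq_Icc (h : A + B = Icc 1 n) (h0 : 0 ∈ B) {a : ℤ} (ha : a ∈ A) :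
    1 ≤ a := by
  have : a + 0 ∈ Icc 1 n := h ▸ add_mem_add ha h0
  simpa using (mem_Icc.mp this).1

theorem one_mem_of_add_eq_Icc (h : A + B = Icc 1 n) (h0 : 0 ∈ B) (hB : ∀ b ∈ B, 0 ≤ b)
    (hn : 1 ≤ n) : 1 ∈ A := by
  obtain ⟨a, ha, b, hb, hab⟩ := mem_add.mp (h ▸ left_mem_Icc.mpr hn : (1 : ℤ) ∈ A + B)
  obtain rfl : a = 1 := by
    have := one_le_of_add_eq_Icc h h0 ha
    have := hB b hb
    omega
  exact ha

end IntervalTiling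

theorem CanTiling.swapShift {n β : ℕ} {p : Finset ℤ × Finset ℤ} (hn : 0 < n) (hβ : β ∣ n)
    (hp : CanTiling n β p) : CanTiling n (n / β) (swapShift 1 p) := by
  obtain ⟨hsum, hA, hB, h0, hB_nonneg⟩ := hp
  refine ⟨?_, ?_, ?_, ?_, ?_⟩
  · rw [swapShift_fst_add_snd, hsum]
  · rw [_root_.swapShift, card_vadd_finset, hB]
  · rw [_root_.swapShift, card_vadd_finset, hA, Nat.div_div_self hβ hn.ne']
  · have h1 := one_mem_of_add_eq_Icc hsum h0 hB_nonneg (by omega)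
    simpa [_root_.swapShift] using vadd_mem_vadd_finset (a := (-1 : ℤ)) h1
  · intro b hb
    obtain ⟨a, ha, rfl⟩ := mem_vadd_finset.mp hb
    have := one_le_of_add_eq_Icc hsum h0 ha
    simp only [vadd_eq_add]
    omega

theorem canTiling_swapShift_iff {n α : ℕ} {p : Finset ℤ × Finset ℤ} (hn : 0 < n) (hα : α ∣ n) :
    CanTiling n α p ↔ CanTiling n (n / α) (swapShift 1 p) := by
  refine ⟨CanTiling.swapShift hn hα, fun hp => ?_⟩
  have := hp.swapShift hn (Nat.div_dvd_of_dvd hα)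
  rwa [swapShift_involutive, Nat.div_div_self hα hn.ne'] at this

/-- There is a bijection between canonical tilings of `[1,n]` with tile size `α`
and canonical tilings of `[1,n]` with tile size `n/α`, when `α ∣ n`. -/
theorem tilings_size_swap_bijection (n α : ℕ) (hn : 0 < n) (hα : α ∣ n) :
    Nonempty ({p : Finset ℤ × Finset ℤ // CanTiling n α p} ≃
              {p : Finset ℤ × Finset ℤ // CanTiling n (n / α) p}) :=
  ⟨(swapShift_involutive (1 : ℤ)).toPerm.subtypeEquiv fun _ => canTiling_swapShift_iff hn hα⟩
end

section
/- Let (A,B) be a valid tiling of [1,n] with first segment size k_s and first rift size k_r > 0. Then B contains the set B* = {x·k_s : x ∈ {0, 1, ..., k_r/k_s}}. -/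
open Finset Pointwise

/-!
Since `|A|·|B| = n`, every element of `[1,n]` is `a + b` in exactly one way. The first segment
is the interval `[1, k_s]` and the first rift is `(k_s, k_s + k_r]`, which contains no element
of `A`. If `y ∈ B` and `y + k_s ≤ k_r`, write `y + k_s + 1 = a + b`: then `a ≤ k_s`, so
`y < b ≤ y + k_s`, and `b < y + k_s` is impossible because `(b + 1 - y) + y = 1 + b` would be a
second representation. Hence `y + k_s ∈ B`, and induction from `0 ∈ B` gives all multiples.
-/

noncomputable def firstSegment (A : Finset ℤ) (N : ℤ) : Finset ℤ :=
  A.filter (fun x => ∀ y ∈ Icc (1 : ℤ) N \ A, x < y)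

noncomputable def firstRift (A : Finset ℤ) (N : ℤ) : Finset ℤ :=
  (Icc (1 : ℤ) N \ A).filter (fun x => ∀ y ∈ A \ firstSegment A N, x < y)

theorem mem_firstSegment {A : Finset ℤ} {N x : ℤ} :
    x ∈ firstSegment A N ↔ x ∈ A ∧ ∀ y ∈ Icc 1 N \ A, x < y :=
  mem_filter

theorem mem_firstRift {A : Finset ℤ} {N x : ℤ} :
    x ∈ firstRift A N ↔ x ∈ Icc 1 N \ A ∧ ∀ y ∈ A \ firstSegment A N, x < y :=
  mem_filter

theorem Int.eq_Ico_card_of_forall_le_of_mem {S : Finset ℤ} {c : ℤ} (hle : ∀ y ∈ S, c ≤ y)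
    (hmem : ∀ y ∈ S, ∀ x, c ≤ x → x ≤ y → x ∈ S) : S = Ico c (c + #S) := by
  obtain ⟨m, rfl⟩ : ∃ m, S = Icc c m := by
    rcases S.eq_empty_or_nonempty with rfl | hS
    · exact ⟨c - 1, by simp⟩
    refine ⟨S.max' hS, ext fun x => ⟨fun hx => mem_Icc.mpr ⟨hle x hx, S.le_max' x hx⟩, ?_⟩⟩
    exact fun hx => hmem _ (S.max'_mem hS) x (mem_Icc.mp hx).1 (mem_Icc.mp hx).2
  ext x
  simp only [mem_Icc, mem_Ico, Int.card_Icc]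
  omega

section UniqueSums

variable {A B : Finset ℤ} {k g : ℤ}

theorem add_mem_of_injOn_add (hinj : (A ×ˢ B : Set (ℤ × ℤ)).InjOn fun p => p.1 + p.2)
    (hA : ∀ a ∈ A, 1 ≤ a) (hB : ∀ b ∈ B, 0 ≤ b) (hseg : Icc 1 k ⊆ A)
    (hgap : Disjoint A (Ioc k (k + g))) {y : ℤ} (hy : y ∈ B) (hyg : y < g)
    (hcover : y + k + 1 ∈ A + B) : y + k ∈ B := by
  obtain ⟨a, ha, b, hb, hab⟩ := mem_add.mp hcover
  have hak : a ≤ k := by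
    by_contra h
    exact disjoint_left.mp hgap ha (mem_Ioc.mpr ⟨by omega, by linarith [hB b hb]⟩)
  obtain rfl | hlt : b = y + k ∨ b < y + k := by have := hA a ha; omega
  · exact hb
  have h1 : (1 : ℤ) ∈ A := hseg (mem_Icc.mpr ⟨le_rfl, by omega⟩)
  have h' : b + 1 - y ∈ A := hseg (mem_Icc.mpr ⟨by omega, by omega⟩)
  have hpair := hinj (Set.mk_mem_prod h' hy) (Set.mk_mem_prod h1 hb) (by simp only; ring)
  simp only [Prod.mk.injEq] at hpair
  omega

theorem natCast_mul_mem_of_injOn_add (hinj : (A ×ˢ B : Set (ℤ × ℤ)).InjOn fun p => p.1 + p.2)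
    (hA : ∀ a ∈ A, 1 ≤ a) (hB : ∀ b ∈ B, 0 ≤ b) (hseg : Icc 1 k ⊆ A)
    (hgap : Disjoint A (Ioc k (k + g))) (hcover : Icc 1 (k + g) ⊆ A + B) (h0 : 0 ∈ B)
    (hk : 0 ≤ k) : ∀ x : ℕ, x * k ≤ g → (x : ℤ) * k ∈ B
  | 0, _ => by simpa using h0
  | x + 1, hx => by
    obtain rfl | hk := hk.eq_or_lt
    · simpa using h0
    push_cast at hx ⊢
    have hxk : (x : ℤ) * k < g := by linarith
    have hy := natCast_mul_mem_of_injOn_add hinj hA hB hseg hgap hcover h0 hk.le x hxk.le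
    have hx0 : 0 ≤ (x : ℤ) * k := by positivity
    rw [add_one_mul]
    exact add_mem_of_injOn_add hinj hA hB hseg hgap hy hxk
      (hcover (mem_Icc.mpr ⟨by omega, by omega⟩))

end UniqueSums

section FirstSegmentAndRift

variable {A : Finset ℤ} {N c : ℤ}

theorem firstSegment_eq_Ico (hA : ∀ a ∈ A, 1 ≤ a) (hc : IsLeast (↑(Icc 1 N \ A) : Set ℤ) c) :
    firstSegment A N = Ico 1 c := by
  have hcN := mem_Icc.mp (mem_sdiff.mp hc.1).1
  ext x
  simp only [mem_firstSegment, mem_Ico]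
  refine ⟨fun ⟨hx, hlt⟩ => ⟨hA x hx, hlt c hc.1⟩, fun ⟨h1, hxc⟩ => ⟨?_, ?_⟩⟩
  · by_contra hx
    have := hc.2 (mem_sdiff.mpr ⟨mem_Icc.mpr ⟨h1, by omega⟩, hx⟩)
    omega
  · exact fun y hy => hxc.trans_le (hc.2 hy)

theorem firstRift_eq_Ico (hc : IsLeast (↑(Icc 1 N \ A) : Set ℤ) c) :
    firstRift A N = Ico c (c + #(firstRift A N)) := by
  have hc1 := (mem_Icc.mp (mem_sdiff.mp hc.1).1).1
  refine Int.eq_Ico_card_of_forall_le_of_mem (fun y hy => hc.2 (mem_firstRift.mp hy).1) ?_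
  intro y hy x hcx hxy
  obtain ⟨hyC, hlt⟩ := mem_firstRift.mp hy
  have hyN := (mem_Icc.mp (mem_sdiff.mp hyC).1).2
  refine mem_firstRift.mpr ⟨mem_sdiff.mpr ⟨mem_Icc.mpr ⟨by omega, by omega⟩, fun hx => ?_⟩,
    fun z hz => hxy.trans_lt (hlt z hz)⟩
  have hxs : x ∉ firstSegment A N := fun hxs => by
    have := (mem_firstSegment.mp hxs).2 c hc.1
    omega
  have := hlt x (mem_sdiff.mpr ⟨hx, hxs⟩)
  omega

theorem firstSegment_eq_Icc_card (hA : ∀ a ∈ A, 1 ≤ a)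
    (hc : IsLeast (↑(Icc 1 N \ A) : Set ℤ) c) :
    firstSegment A N = Icc 1 (#(firstSegment A N) : ℤ) := by
  have hc1 := (mem_Icc.mp (mem_sdiff.mp hc.1).1).1
  rw [firstSegment_eq_Ico hA hc, Int.card_Ico]
  ext x
  simp only [mem_Ico, mem_Icc]
  omega

theorem firstRift_eq_Ioc_card (hA : ∀ a ∈ A, 1 ≤ a) (hc : IsLeast (↑(Icc 1 N \ A) : Set ℤ) c) :
    firstRift A N =
      Ioc (#(firstSegment A N) : ℤ) (#(firstSegment A N) + #(firstRift A N)) := by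
  have hc1 := (mem_Icc.mp (mem_sdiff.mp hc.1).1).1
  conv_lhs => rw [firstRift_eq_Ico hc]
  rw [firstSegment_eq_Ico hA hc, Int.card_Ico]
  ext x
  simp only [mem_Ico, mem_Ioc]
  omega

end FirstSegmentAndRift

theorem image_range_div_card_firstSegment_subset {A B : Finset ℤ} {N : ℤ}
    (hinj : (A ×ˢ B : Set (ℤ × ℤ)).InjOn fun p => p.1 + p.2) (hA : ∀ a ∈ A, 1 ≤ a)
    (hB : ∀ b ∈ B, 0 ≤ b) (h0 : 0 ∈ B) (hcover : Icc 1 N ⊆ A + B)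
    (hr : (firstRift A N).Nonempty) :
    (range (#(firstRift A N) / #(firstSegment A N) + 1)).image
      (fun x : ℕ => (x : ℤ) * #(firstSegment A N)) ⊆ B := by
  obtain ⟨c, hc⟩ : ∃ c, IsLeast (↑(Icc 1 N \ A) : Set ℤ) c :=
    ⟨_, isLeast_min' _ (hr.mono (filter_subset _ _))⟩
  have hs := firstSegment_eq_Icc_card hA hc
  have hrift := firstRift_eq_Ioc_card hA hc
  set ks := #(firstSegment A N)
  set kr := #(firstRift A N)
  have hseg : Icc 1 (ks : ℤ) ⊆ A := by
    rw [← hs]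
    exact filter_subset _ _
  have hgap : Disjoint A (Ioc (ks : ℤ) (ks + kr)) := by
    rw [← hrift]
    exact disjoint_sdiff.mono_right (filter_subset _ _)
  have hend : (ks + kr : ℤ) ∈ Icc 1 N := by
    have : (ks + kr : ℤ) ∈ firstRift A N := by
      rw [hrift, mem_Ioc]
      have := hr.card_pos
      omega
    exact (mem_sdiff.mp (mem_firstRift.mp this).1).1
  have hcover' : Icc 1 (ks + kr : ℤ) ⊆ A + B :=
    (Icc_subset_Icc_right (mem_Icc.mp hend).2).trans hcover
  rintro _ hz
  obtain ⟨x, hx, rfl⟩ := mem_image.mp hz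
  refine natCast_mul_mem_of_injOn_add hinj hA hB hseg hgap hcover' h0 (Nat.cast_nonneg _) x ?_
  have hle : x * ks ≤ kr := (Nat.mul_le_mul_right ks (Nat.lt_succ_iff.mp (mem_range.mp hx))).trans
    (Nat.div_mul_le_self _ _)
  exact_mod_cast hle

theorem Bstar_subset_translations_general (n : ℕ) (A B : Finset ℤ)
    (hsum : A + B = Finset.Icc 1 (n : ℤ)) (hcard : A.card * B.card = n)
    (h0 : (0 : ℤ) ∈ B) (hpos : ∀ b ∈ B, 0 ≤ b) :
    let Cc := Finset.Icc (1 : ℤ) (n : ℤ) \ A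
    let s1 := A.filter (fun x => ∀ y ∈ Cc, x < y)
    let r1 := Cc.filter (fun x => ∀ y ∈ A \ s1, x < y)
    0 < r1.card →
      (Finset.range (r1.card / s1.card + 1)).image
          (fun x : ℕ => (x : ℤ) * (s1.card : ℤ)) ⊆ B := by
  intro Cc s1 r1 hr
  have hinj : (A ×ˢ B : Set (ℤ × ℤ)).InjOn fun p => p.1 + p.2 :=
    card_add_iff.mp (by rw [hsum, Int.card_Icc, hcard]; omega)
  have hA : ∀ a ∈ A, 1 ≤ a := fun a ha =>
    (mem_Icc.mp (hsum ▸ add_zero a ▸ add_mem_add ha h0)).1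
  exact image_range_div_card_firstSegment_subset (N := n) hinj hA hpos h0 hsum.ge
    (card_pos.mp hr)

/-- For a canonical valid tiling `(A,B)` of `[1,n]` with first segment size `k_s` and
first rift size `k_r > 0`, the set `B* = {x·k_s : 0 ≤ x ≤ k_r/k_s}` is contained in `B`. -/
theorem Bstar_subset_translations (n : ℕ) (hn : 0 < n) (A B : Finset ℤ)
    (hsum : A + B = Finset.Icc 1 (n : ℤ)) (hcard : A.card * B.card = n)
    (h0 : (0 : ℤ) ∈ B) (hpos : ∀ b ∈ B, 0 ≤ b) :
    let Cc := Finset.Icc (1 : ℤ) (n : ℤ) \ A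
    let s1 := A.filter (fun x => ∀ y ∈ Cc, x < y)
    let r1 := Cc.filter (fun x => ∀ y ∈ A \ s1, x < y)
    0 < r1.card →
      (Finset.range (r1.card / s1.card + 1)).image
          (fun x : ℕ => (x : ℤ) * (s1.card : ℤ)) ⊆ B :=
  Bstar_subset_translations_general n A B hsum hcard h0 hpos
end

section
/- Let C = [1,x₁] × ⋯ × [1,x_d] ⊆ ℤ^d, n = |C| = x₁⋯x_d, and C' = [1,n] ⊆ ℤ. Then the maximum over α of the number of canonical tilings of C by tiles of size α is at most the maximum over α' of the number of canonical tilings of C' by tiles of size α': max_α |T(α, C)| ≤ max_{α'} |T(α', C')|. -/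
open Finset Pointwise

/-- Canonical 1-dimensional tilings of `[1,n]` with tile size `α`. -/
def CanT1 (α n : ℕ) : Set (Finset ℤ × Finset ℤ) :=
  {p | p.1 + p.2 = Finset.Icc 1 (n : ℤ) ∧ p.1.card = α ∧
    (Finset.Icc 1 (n : ℤ)).card = p.1.card * p.2.card ∧
    (0 : ℤ) ∈ p.2 ∧ ∀ b ∈ p.2, 0 ≤ b}

/-- Canonical `d`-dimensional tilings of `C = [1,x₁] × ⋯ × [1,x_d]` with tile size `α`. -/
def CanTd (d : ℕ) (x : Fin d → ℕ) (α : ℕ) :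
    Set (Finset (Fin d → ℤ) × Finset (Fin d → ℤ)) :=
  {p | p.1 + p.2 = Fintype.piFinset (fun i => Finset.Icc 1 (x i : ℤ)) ∧
    p.1.card = α ∧
    (Fintype.piFinset (fun i => Finset.Icc 1 (x i : ℤ))).card = p.1.card * p.2.card ∧
    (0 : Fin d → ℤ) ∈ p.2 ∧ ∀ b ∈ p.2, ∀ i, 0 ≤ b i}

/-!
Shifting the digits down by one, a point `v` of the box `∏ [1, xᵢ]` is a mixed-radix numeral,
and reading it off is the restriction of an additive map `f : ℤ^d → ℤ` with nonnegative place
values; up to a translation, `f` maps the box bijectively onto `[1, n]`. An additive map that is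
injective on `C = A + B` is injective on `A` and on `B`, so `(A, B) ↦ (f A + c, f B)` sends
tilings of `C` to tilings of `f C + c` with the same `|A|` and `|B|`, keeps `B` canonical, and is
injective on tilings. Hence `|T(α, C)| ≤ |T(α, [1, n])|`.
-/

namespace Finset

variable {G H : Type*} [AddCommGroup G] [AddCommGroup H] [DecidableEq G]

theorem injOn_right_of_injOn_add {f : G →+ H} {A B : Finset G} {a : G}
    (hf : Set.InjOn f ↑(A + B)) (ha : a ∈ A) : Set.InjOn f ↑B := by
  intro b₁ hb₁ b₂ hb₂ h
  have := hf (add_mem_add ha hb₁) (add_mem_add ha hb₂) (by simp only [map_add, h])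
  exact add_left_cancel this

theorem image_add_affine [DecidableEq H] (f : G →+ H) (c : H) (A B : Finset G) :
    (A + B).image (fun v => f v + c) = A.image (fun v => f v + c) + B.image f := by
  ext y
  simp only [mem_image, mem_add]
  constructor
  · rintro ⟨_, ⟨a, ha, b, hb, rfl⟩, rfl⟩
    exact ⟨_, ⟨a, ha, rfl⟩, _, ⟨b, hb, rfl⟩, by rw [map_add, add_right_comm]⟩
  · rintro ⟨_, ⟨a, ha, rfl⟩, _, ⟨b, hb, rfl⟩, rfl⟩
    exact ⟨_, ⟨a, ha, b, hb, rfl⟩, by rw [map_add, add_right_comm]⟩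

theorem finite_tilings {C : Finset G} (hC : C.Nonempty) :
    {p : Finset G × Finset G | p.1 + p.2 = C ∧ 0 ∈ p.2}.Finite := by
  refine (C.powerset ×ˢ (C - C).powerset).finite_toSet.subset ?_
  rintro ⟨A, B⟩ ⟨hAB, hB⟩
  obtain ⟨a, ha⟩ := (hAB ▸ hC).of_add_left
  simp only [coe_product, Set.mem_prod, mem_coe, mem_powerset]
  refine ⟨hAB ▸ subset_add_left A hB, fun b hb => ?_⟩
  rw [← hAB]
  simpa using sub_mem_sub (add_mem_add ha hb) (add_mem_add ha hB)

def mapTiling [DecidableEq H] (f : G →+ H) (c : H) (p : Finset G × Finset G) :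
    Finset H × Finset H :=
  (p.1.image (fun v => f v + c), p.2.image f)

theorem injOn_mapTiling [DecidableEq H] {f : G →+ H} (c : H) {C : Finset G}
    (hC : C.Nonempty) (hf : Set.InjOn f ↑C) :
    Set.InjOn (mapTiling f c) {p | p.1 + p.2 = C ∧ 0 ∈ p.2} := by
  rintro ⟨A₁, B₁⟩ ⟨h₁ : A₁ + B₁ = C, h0₁ : (0 : G) ∈ B₁⟩
    ⟨A₂, B₂⟩ ⟨h₂ : A₂ + B₂ = C, h0₂ : (0 : G) ∈ B₂⟩ h
  simp only [mapTiling, Prod.mk.injEq] at h ⊢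
  have hψ : Set.InjOn (fun v => f v + c) ↑C := fun u hu v hv huv =>
    hf hu hv (add_right_cancel huv)
  obtain rfl : A₁ = A₂ := (image_eq_image_iff_of_injOn hψ (h₁ ▸ subset_add_left _ h0₁)
    (h₂ ▸ subset_add_left _ h0₂)).1 h.1
  obtain ⟨a, ha⟩ := (h₁ ▸ hC).of_add_left
  have hB : Set.InjOn f ↑(B₁ ∪ B₂) := by
    refine injOn_right_of_injOn_add (hf.mono (coe_subset.2 ?_)) (mem_singleton_self a)
    rw [add_union]
    exact union_subset (h₁ ▸ add_subset_add_right (singleton_subset_iff.2 ha))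
      (h₂ ▸ add_subset_add_right (singleton_subset_iff.2 ha))
  exact ⟨rfl, (image_eq_image_iff_of_injOn hB subset_union_left subset_union_right).1 h.2⟩

theorem card_mapTiling [DecidableEq H] {f : G →+ H} (c : H) {C : Finset G}
    (hC : C.Nonempty) (hf : Set.InjOn f ↑C) {A B : Finset G} (hAB : A + B = C) (hB : 0 ∈ B) :
    (mapTiling f c (A, B)).1.card = A.card ∧ (mapTiling f c (A, B)).2.card = B.card := by
  obtain ⟨a, ha⟩ := (hAB ▸ hC).of_add_left
  refine ⟨card_image_of_injOn fun u hu v hv huv => ?_,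
    card_image_of_injOn (injOn_right_of_injOn_add (hAB ▸ hf) ha)⟩
  have hA : A ⊆ C := hAB ▸ subset_add_left A hB
  exact hf (hA hu) (hA hv) (add_right_cancel huv)

end Finset

section MixedRadix

variable {d : ℕ} (x : Fin d → ℕ)

/-- Digit `i` has place value `x 0 * ⋯ * x (i - 1)`, the convention of `finPiFinEquiv`. -/
def mixedRadix : (Fin d → ℤ) →+ ℤ where
  toFun v := ∑ i, v i * ∏ j : Fin i, (x (Fin.castLE i.is_lt.le j) : ℤ)
  map_zero' := by simp
  map_add' u v := by simp [add_mul, sum_add_distrib]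

theorem mixedRadix_apply (v : Fin d → ℤ) :
    mixedRadix x v = ∑ i, v i * ∏ j : Fin i, (x (Fin.castLE i.is_lt.le j) : ℤ) :=
  rfl

theorem mixedRadix_nonneg {v : Fin d → ℤ} (hv : ∀ i, 0 ≤ v i) : 0 ≤ mixedRadix x v :=
  (mixedRadix_apply x v).symm ▸
    sum_nonneg fun i _ => mul_nonneg (hv i) (prod_nonneg fun _ _ => Int.natCast_nonneg _)

theorem mixedRadix_natCast (t : ∀ i, Fin (x i)) :
    mixedRadix x (fun i => (t i : ℤ)) = finPiFinEquiv t := by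
  simp [mixedRadix_apply, finPiFinEquiv_apply]

theorem mixedRadix_natCast_add_one (t : ∀ i, Fin (x i)) :
    mixedRadix x (fun i => (t i : ℤ) + 1) = finPiFinEquiv t + mixedRadix x 1 := by
  rw [← mixedRadix_natCast, ← map_add]
  rfl

theorem mem_box_iff {v : Fin d → ℤ} :
    v ∈ Fintype.piFinset (fun i => Icc 1 (x i : ℤ)) ↔
      ∃ t : ∀ i, Fin (x i), (fun i => (t i : ℤ) + 1) = v := by
  simp only [Fintype.mem_piFinset, mem_Icc]
  constructor
  · intro hv
    exact ⟨fun i => ⟨(v i - 1).toNat, by have := hv i; omega⟩,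
      funext fun i => by have := hv i; simp only [Int.pred_toNat]; omega⟩
  · rintro ⟨t, rfl⟩ i
    have := (t i).isLt
    dsimp only
    omega

theorem card_box : (Fintype.piFinset fun i => Icc 1 (x i : ℤ)).card = ∏ i, x i := by
  simp [Fintype.card_piFinset]

theorem injOn_mixedRadix_box :
    Set.InjOn (mixedRadix x) ↑(Fintype.piFinset fun i => Icc 1 (x i : ℤ)) := by
  rintro _ hv _ hw h
  obtain ⟨t, rfl⟩ := (mem_box_iff x).1 hv
  obtain ⟨s, rfl⟩ := (mem_box_iff x).1 hw
  rw [mixedRadix_natCast_add_one, mixedRadix_natCast_add_one, add_left_inj, Nat.cast_inj,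
    Fin.val_inj, finPiFinEquiv.apply_eq_iff_eq] at h
  rw [h]

theorem image_mixedRadix_box :
    (Fintype.piFinset fun i => Icc 1 (x i : ℤ)).image
        (fun v => mixedRadix x v + (1 - mixedRadix x 1)) = Icc 1 ((∏ i, x i : ℕ) : ℤ) := by
  ext k
  simp only [mem_image, mem_box_iff, mem_Icc]
  constructor
  · rintro ⟨_, ⟨t, rfl⟩, rfl⟩
    have := (finPiFinEquiv t).isLt
    rw [mixedRadix_natCast_add_one]
    omega
  · intro hk
    refine ⟨_, ⟨finPiFinEquiv.symm ⟨(k - 1).toNat, by omega⟩, rfl⟩, ?_⟩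
    rw [mixedRadix_natCast_add_one, Equiv.apply_symm_apply, Fin.val_mk]
    omega

end MixedRadix

theorem box_nonempty {d : ℕ} {x : Fin d → ℕ} (hx : ∀ i, 0 < x i) :
    (Fintype.piFinset fun i => Icc 1 (x i : ℤ)).Nonempty := by
  rw [← card_pos, card_box]
  exact prod_pos fun i _ => hx i

theorem mapTiling_mem_canT1 {d : ℕ} {x : Fin d → ℕ} (hx : ∀ i, 0 < x i) {α : ℕ}
    {p : Finset (Fin d → ℤ) × Finset (Fin d → ℤ)} (hp : p ∈ CanTd d x α) :
    mapTiling (mixedRadix x) (1 - mixedRadix x 1) p ∈ CanT1 α (∏ i, x i) := by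
  obtain ⟨A, B⟩ := p
  obtain ⟨hAB, rfl, hcard, h0, hB⟩ := hp
  obtain ⟨hcardA, hcardB⟩ :=
    card_mapTiling (1 - mixedRadix x 1) (box_nonempty hx) (injOn_mixedRadix_box x) hAB h0
  refine ⟨?_, hcardA, ?_, mem_image.2 ⟨0, h0, map_zero _⟩, ?_⟩
  · rw [mapTiling, ← image_add_affine, hAB, image_mixedRadix_box]
  · rw [hcardA, hcardB, ← hcard, card_box, Int.card_Icc, add_sub_cancel_right, Int.toNat_natCast]
  · simp only [mapTiling, mem_image]
    rintro _ ⟨b, hb, rfl⟩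
    exact mixedRadix_nonneg x (hB b hb)

theorem finite_canT1 (α : ℕ) {n : ℕ} (hn : 0 < n) : (CanT1 α n).Finite :=
  (finite_tilings (C := Icc 1 (n : ℤ)) ⟨1, by simp; omega⟩).subset
    fun _ hp => ⟨hp.1, hp.2.2.2.1⟩

theorem contiguous_max_tilings_le_interval_general (d : ℕ) (x : Fin d → ℕ)
    (hx : ∀ i, 0 < x i) :
    ∀ α : ℕ, ∃ α' : ℕ,
      Nat.card (CanTd d x α) ≤ Nat.card (CanT1 α' (∏ i, x i)) := by
  intro α
  have hinj := injOn_mapTiling (1 - mixedRadix x 1) (box_nonempty hx) (injOn_mixedRadix_box x)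
  exact ⟨α, Set.ncard_le_ncard_of_injOn _ (fun _ => mapTiling_mem_canT1 hx)
    (hinj.mono fun _ hp => And.intro hp.1 hp.2.2.2.1)
    (finite_canT1 α (prod_pos fun i _ => hx i))⟩

/-- The maximum number of canonical tilings of a contiguous `C ⊆ ℤ^d` (over tile sizes)
is at most the maximum number of canonical tilings of the interval `[1,|C|] ⊆ ℤ`. -/
theorem contiguous_max_tilings_le_interval (d : ℕ) (hd : 1 ≤ d) (x : Fin d → ℕ)
    (hx : ∀ i, 0 < x i) :
    ∀ α : ℕ, ∃ α' : ℕ,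
      Nat.card (CanTd d x α) ≤ Nat.card (CanT1 α' (∏ i, x i)) :=
  contiguous_max_tilings_le_interval_general d x hx
end

section
/- For every k ∈ ℤ⁺, the number of canonical tilings of [1, 2^k] by tiles of size 2^⌊k/2⌋ is greater than 1.5^(k−2); in particular |T(2^⌊k/2⌋, [2^k])| > 2^(0.58(k−2)). -/
open Finset Pointwise

/-! ### Binary sums machinery -/

private def bsum (T : Finset ℕ) : ℤ := ∑ i ∈ T, 2 ^ i

private lemma bsum_nonneg (T : Finset ℕ) : 0 ≤ bsum T :=
  Finset.sum_nonneg fun i _ => by positivity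

private lemma geo (n : ℕ) : bsum (range n) = 2 ^ n - 1 := by
  induction n with
  | zero => simp [bsum]
  | succ n ih => simp only [bsum, Finset.sum_range_succ] at *; rw [ih]; ring

private lemma bsum_lt {T : Finset ℕ} {n : ℕ} (h : T ⊆ range n) : bsum T < 2 ^ n := by
  calc bsum T ≤ bsum (range n) :=
        Finset.sum_le_sum_of_subset_of_nonneg h (fun i _ _ => by positivity)
  _ = 2 ^ n - 1 := geo n
  _ < 2 ^ n := by omega

private lemma bsum_injOn (n : ℕ) :
    ∀ T ⊆ range n, ∀ T' ⊆ range n, bsum T = bsum T' → T = T' := by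
  induction n with
  | zero => intro T hT T' hT' _
            simp only [range_zero, subset_empty] at hT hT'; rw [hT, hT']
  | succ n ih =>
    intro T hT T' hT' he
    have key : ∀ U : Finset ℕ, U ⊆ range (n+1) → n ∈ U →
        bsum U = 2 ^ n + bsum (U.erase n) ∧ U.erase n ⊆ range n := by
      intro U hU hn
      constructor
      · rw [bsum, ← Finset.add_sum_erase _ _ hn]; rfl
      · intro i hi
        have := hU (Finset.mem_of_mem_erase hi)
        have := Finset.ne_of_mem_erase hi
        simp only [mem_range] at *; omega
    have sub : ∀ U : Finset ℕ, U ⊆ range (n+1) → n ∉ U → U ⊆ range n := by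
      intro U hU hn i hi
      have := hU hi
      have : i ≠ n := fun h => hn (h ▸ hi)
      simp only [mem_range] at *; omega
    by_cases h1 : n ∈ T <;> by_cases h2 : n ∈ T'
    · obtain ⟨e1, s1⟩ := key T hT h1
      obtain ⟨e2, s2⟩ := key T' hT' h2
      have : bsum (T.erase n) = bsum (T'.erase n) := by omega
      have := ih _ s1 _ s2 this
      rw [← Finset.insert_erase h1, ← Finset.insert_erase h2, this]
    · obtain ⟨e1, s1⟩ := key T hT h1
      have := bsum_lt (sub T' hT' h2)
      have := bsum_nonneg (T.erase n)
      omega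
    · obtain ⟨e2, s2⟩ := key T' hT' h2
      have := bsum_lt (sub T hT h1)
      have := bsum_nonneg (T'.erase n)
      omega
    · exact ih _ (sub T hT h1) _ (sub T' hT' h2) he

private lemma bsum_inj : Function.Injective bsum := by
  intro T T' h
  obtain ⟨n, hn⟩ := (T ∪ T').exists_nat_subset_range
  exact bsum_injOn n T (Finset.subset_union_left.trans hn) T'
    (Finset.subset_union_right.trans hn) h

private def sums (S : Finset ℕ) : Finset ℤ := S.powerset.image bsum

private lemma card_sums (S : Finset ℕ) : (sums S).card = 2 ^ S.card := by
  rw [sums, Finset.card_image_of_injective _ bsum_inj, Finset.card_powerset]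

private lemma sums_injective : Function.Injective sums := fun _ _ h =>
  Finset.powerset_injective (Finset.image_injective bsum_inj h)

private lemma mem_sums {S : Finset ℕ} {x : ℤ} : x ∈ sums S ↔ ∃ T ⊆ S, bsum T = x := by
  simp [sums, Finset.mem_image, Finset.mem_powerset]

private lemma sums_add {S U : Finset ℕ} (h : Disjoint S U) :
    sums S + sums U = sums (S ∪ U) := by
  ext x
  simp only [Finset.mem_add, mem_sums]
  constructor
  · rintro ⟨a, ⟨T, hT, rfl⟩, b, ⟨V, hV, rfl⟩, rfl⟩
    refine ⟨T ∪ V, Finset.union_subset_union hT hV, ?_⟩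
    rw [bsum, Finset.sum_union (Finset.disjoint_of_subset_left hT
      (Finset.disjoint_of_subset_right hV h))]
    rfl
  · rintro ⟨W, hW, rfl⟩
    refine ⟨bsum (W ∩ S), ⟨W ∩ S, Finset.inter_subset_right, rfl⟩,
      bsum (W ∩ U), ⟨W ∩ U, Finset.inter_subset_right, rfl⟩, ?_⟩
    rw [bsum, bsum, bsum, ← Finset.sum_union]
    · congr 1
      rw [← Finset.inter_union_distrib_left]
      exact Finset.inter_eq_left.mpr hW
    · exact Finset.disjoint_of_subset_left Finset.inter_subset_right
        (Finset.disjoint_of_subset_right Finset.inter_subset_right h)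

private lemma sums_range (n : ℕ) : sums (range n) = Icc 0 (2 ^ n - 1) := by
  induction n with
  | zero => simp [sums, bsum]
  | succ n ih =>
    rw [Finset.range_add_one, sums, Finset.powerset_insert, Finset.image_union, ← sums, ih,
      Finset.image_image]
    have : ∀ T ∈ (range n).powerset, (bsum ∘ insert n) T = 2 ^ n + bsum T := by
      intro T hT
      have hn : n ∉ T := fun h => by simpa using Finset.mem_powerset.mp hT h
      simp only [Function.comp_apply, bsum, Finset.sum_insert hn]
    rw [Finset.image_congr this]
    have : Finset.image (fun T => 2 ^ n + bsum T) (range n).powerset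
        = Finset.image (fun x => 2 ^ n + x) (sums (range n)) := by
      rw [sums, Finset.image_image]; rfl
    rw [this, ih, Finset.image_add_left_Icc]
    ext x
    simp only [Finset.mem_union, Finset.mem_Icc]
    constructor
    · rintro (h | h) <;> constructor <;> [omega; skip; omega; skip] <;>
        have : (0:ℤ) < 2 ^ n := by positivity
      all_goals omega
    · intro h
      have : (0:ℤ) < 2 ^ n := by positivity
      by_cases hx : x ≤ 2 ^ n - 1
      · left; omega
      · right; constructor <;> [omega; skip]
        have : (2:ℤ) ^ (n+1) = 2 ^ n + 2 ^ n := by ring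
        omega

/-! ### The tiling construction -/

private def tiling (k : ℕ) (S : Finset ℕ) : Finset ℤ × Finset ℤ :=
  ({1} + sums S, sums (range k \ S))

private lemma card_Icc_int (n : ℕ) : (Finset.Icc 1 ((2 ^ n : ℕ) : ℤ)).card = 2 ^ n := by
  rw [Int.card_Icc, show ((2^n:ℕ):ℤ) + 1 - 1 = ((2^n : ℕ):ℤ) by ring, Int.toNat_natCast]

private lemma zero_mem_sums (S : Finset ℕ) : (0:ℤ) ∈ sums S :=
  mem_sums.mpr ⟨∅, Finset.empty_subset _, by simp [bsum]⟩

private lemma tiling_mem {k : ℕ} {S : Finset ℕ} (hS : S ⊆ range k) (hc : S.card = k / 2) :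
    tiling k S ∈ CanT1 (2 ^ (k / 2)) (2 ^ k) := by
  have hdisj : Disjoint S (range k \ S) := Finset.disjoint_sdiff
  have hunion : S ∪ (range k \ S) = range k := Finset.union_sdiff_of_subset hS
  have hcardB : (range k \ S).card = k - k / 2 := by
    rw [Finset.card_sdiff_of_subset hS, Finset.card_range, hc]
  refine ⟨?_, ?_, ?_, ?_, ?_⟩
  · show {1} + sums S + sums (range k \ S) = _
    rw [add_assoc, sums_add hdisj, hunion, sums_range]
    have h2 : (0:ℤ) < 2 ^ k := by positivity
    ext x
    simp only [Finset.mem_add, Finset.mem_singleton, Finset.mem_Icc]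
    push_cast
    constructor
    · rintro ⟨-, b, hb, rfl⟩; omega
    · intro hx
      exact ⟨trivial, x - 1, by omega, by ring⟩
  · show ({1} + sums S).card = _
    rw [Finset.card_singleton_add, card_sums, hc]
  · show (Finset.Icc 1 (((2 ^ k : ℕ)) : ℤ)).card = _
    rw [card_Icc_int]
    show _ = ({1} + sums S).card * (sums (range k \ S)).card
    rw [Finset.card_singleton_add, card_sums, card_sums, hc, hcardB, ← pow_add]
    congr 1
    omega
  · exact zero_mem_sums _
  · intro b hb
    obtain ⟨T, _, rfl⟩ := mem_sums.mp hb
    exact bsum_nonneg T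

/-! ### Counting -/

private lemma canT1_finite (α n : ℕ) (hα : 0 < α) : (CanT1 α n).Finite := by
  apply Set.Finite.subset (Set.finite_Icc (⊥ : Finset ℤ × Finset ℤ)
    ((Finset.Icc 1 (n:ℤ)), (Finset.Icc 0 (n:ℤ))))
  rintro ⟨A, B⟩ ⟨hAB, hA, _, h0, hpos⟩
  have hAsub : A ⊆ Finset.Icc 1 (n:ℤ) := by
    intro a ha
    have : a + 0 ∈ A + B := Finset.add_mem_add ha h0
    rw [hAB] at this
    simpa using this
  have hAne : A.Nonempty := Finset.card_pos.mp (hA ▸ hα)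
  obtain ⟨a, ha⟩ := hAne
  have ha1 : 1 ≤ a := (Finset.mem_Icc.mp (hAsub ha)).1
  have hBsub : B ⊆ Finset.Icc 0 (n:ℤ) := by
    intro b hb
    have : a + b ∈ A + B := Finset.add_mem_add ha hb
    rw [hAB] at this
    have := Finset.mem_Icc.mp this
    exact Finset.mem_Icc.mpr ⟨hpos b hb, by omega⟩
  rw [Set.mem_Icc]
  exact ⟨bot_le, hAsub, hBsub⟩

private lemma card_lower (k : ℕ) :
    k.choose (k / 2) ≤ Nat.card (CanT1 (2 ^ (k / 2)) (2 ^ k)) := by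
  classical
  have hinj : Set.InjOn (tiling k) ((range k).powersetCard (k / 2) : Finset (Finset ℕ)) := by
    intro S hS S' hS' h
    have h2 := congrArg Prod.snd h
    simp only [tiling] at h2
    have := sums_injective h2
    simp only [Finset.mem_coe, Finset.mem_powersetCard] at hS hS'
    have e : range k \ S = range k \ S' := this
    ext i
    constructor <;> intro hi
    · by_contra hni
      have hm : i ∈ range k \ S' := Finset.mem_sdiff.mpr ⟨hS.1 hi, hni⟩
      rw [← e] at hm
      exact (Finset.mem_sdiff.mp hm).2 hi
    · by_contra hni
      have hm : i ∈ range k \ S := Finset.mem_sdiff.mpr ⟨hS'.1 hi, hni⟩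
      rw [e] at hm
      exact (Finset.mem_sdiff.mp hm).2 hi
  have hmaps : ∀ S ∈ ((range k).powersetCard (k / 2)),
      tiling k S ∈ CanT1 (2^(k/2)) (2^k) := by
    intro S hS
    rw [Finset.mem_powersetCard] at hS
    exact tiling_mem hS.1 hS.2
  have hfin := canT1_finite (2 ^ (k/2)) (2 ^ k) (by positivity)
  calc k.choose (k / 2) = ((range k).powersetCard (k / 2)).card := by
        rw [Finset.card_powersetCard, Finset.card_range]
  _ = (((range k).powersetCard (k / 2)).image (tiling k)).card := by
        rw [Finset.card_image_of_injOn hinj]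
  _ = ((((range k).powersetCard (k / 2)).image (tiling k) :
        Finset (Finset ℤ × Finset ℤ)) : Set (Finset ℤ × Finset ℤ)).ncard :=
        (Set.ncard_coe_finset _).symm
  _ ≤ (CanT1 (2 ^ (k / 2)) (2 ^ k)).ncard := by
        refine Set.ncard_le_ncard ?_ hfin
        intro p hp
        simp only [Finset.coe_image, Set.mem_image, Finset.mem_coe] at hp
        obtain ⟨S, hS, rfl⟩ := hp
        exact hmaps S hS
  _ = Nat.card (CanT1 (2 ^ (k / 2)) (2 ^ k)) := (Nat.card_coe_set_eq _).symm

/-! ### Arithmetic -/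

private lemma ratio (k : ℕ) (hk : 2 ≤ k) :
    3 * k.choose (k / 2) ≤ 2 * (k + 1).choose ((k + 1) / 2) := by
  obtain ⟨m, rfl | rfl⟩ : ∃ m, k = 2 * m ∨ k = 2 * m + 1 := ⟨k / 2, by omega⟩
  · obtain ⟨j, rfl⟩ : ∃ j, m = j + 1 := ⟨m - 1, by omega⟩
    have h1 : 2 * (j + 1) / 2 = j + 1 := by omega
    have h2 : (2 * (j + 1) + 1) / 2 = j + 1 := by omega
    rw [h1, h2]
    have h3 : 2 * (j + 1) + 1 = (2 * j + 2) + 1 := by ring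
    have h4 : 2 * (j + 1) = 2 * j + 2 := by ring
    rw [h3, h4]
    have hps : (2 * j + 2 + 1).choose (j + 1)
        = (2 * j + 2).choose j + (2 * j + 2).choose (j + 1) := Nat.choose_succ_succ _ _
    have key : (2 * j + 2).choose (j + 1) * (j + 1) = (2 * j + 2).choose j * (2 * j + 2 - j) :=
      Nat.choose_succ_right_eq _ _
    have h5 : 2 * j + 2 - j = j + 2 := by omega
    rw [h5] at key
    have h6 : (2 * j + 2).choose (j + 1) * (j + 1) ≤ (2 * (2 * j + 2).choose j) * (j + 1) := by
      rw [key]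
      calc (2 * j + 2).choose j * (j + 2) ≤ (2 * j + 2).choose j * (2 * (j + 1)) :=
            Nat.mul_le_mul_left _ (by omega)
      _ = (2 * (2 * j + 2).choose j) * (j + 1) := by ring
    have := Nat.le_of_mul_le_mul_right h6 (by omega)
    omega
  · have h1 : (2 * m + 1) / 2 = m := by omega
    have h2 : (2 * m + 1 + 1) / 2 = m + 1 := by omega
    rw [h1, h2]
    have hps : (2 * m + 1 + 1).choose (m + 1)
        = (2 * m + 1).choose m + (2 * m + 1).choose (m + 1) := Nat.choose_succ_succ _ _
    have hsym : (2 * m + 1).choose m = (2 * m + 1).choose (m + 1) := by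
      have := Nat.choose_symm (n := 2 * m + 1) (k := m + 1) (by omega)
      have h3 : 2 * m + 1 - (m + 1) = m := by omega
      rw [h3] at this
      omega
    omega

private lemma chooseBound (m : ℕ) : (1.5 : ℝ) ^ m < ((m + 2).choose ((m + 2) / 2) : ℝ) := by
  induction m with
  | zero => norm_num
  | succ m ih =>
    have hr := ratio (m + 2) (by omega)
    have hr' : (3 : ℝ) * ((m + 2).choose ((m + 2) / 2) : ℝ)
        ≤ 2 * ((m + 3).choose ((m + 3) / 2) : ℝ) := by
      have := Nat.cast_le (α := ℝ).mpr hr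
      push_cast at this ⊢
      convert this using 3 <;> omega
    have hstep : (1.5 : ℝ) ^ m * 1.5 < ((m + 2).choose ((m + 2) / 2) : ℝ) * 1.5 :=
      mul_lt_mul_of_pos_right ih (by norm_num)
    rw [pow_succ]
    have : (m + 1 + 2) = m + 3 := by omega
    rw [this]
    linarith

private lemma h58 : (2 : ℝ) ^ (0.58 : ℝ) ≤ 1.5 := by
  have hpos : (0 : ℝ) ≤ (2 : ℝ) ^ (0.58 : ℝ) := le_of_lt (Real.rpow_pos_of_pos (by norm_num) _)
  refine le_of_pow_le_pow_left₀ (n := 50) (by norm_num) (by norm_num) ?_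
  have h50 : ((2 : ℝ) ^ (0.58 : ℝ)) ^ (50 : ℕ) = 2 ^ (29 : ℕ) := by
    rw [← Real.rpow_natCast ((2 : ℝ) ^ (0.58 : ℝ)) 50, ← Real.rpow_mul (by norm_num)]
    rw [show (0.58 : ℝ) * ((50 : ℕ) : ℝ) = ((29 : ℕ) : ℝ) by norm_num, Real.rpow_natCast]
  rw [h50]
  norm_num

/-- For every `k ≥ 1`, `|T(2^⌊k/2⌋, [2^k])| > 1.5^(k−2) > 2^(0.58(k−2))`. -/
theorem lower_bound_powers_of_two (k : ℕ) (hk : 0 < k) :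
    ((1.5 : ℝ) ^ ((k : ℝ) - 2) < (Nat.card (CanT1 (2 ^ (k / 2)) (2 ^ k)) : ℝ)) ∧
    ((2 : ℝ) ^ (0.58 * ((k : ℝ) - 2)) <
      (Nat.card (CanT1 (2 ^ (k / 2)) (2 ^ k)) : ℝ)) := by
  have hN := card_lower k
  have hNR : (k.choose (k / 2) : ℝ) ≤ (Nat.card (CanT1 (2 ^ (k / 2)) (2 ^ k)) : ℝ) :=
    Nat.cast_le.mpr hN
  rcases eq_or_lt_of_le (show 1 ≤ k from hk) with h1 | h2
  · obtain rfl : k = 1 := h1.symm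
    have hge : (1 : ℝ) ≤ (Nat.card (CanT1 (2 ^ (1 / 2)) (2 ^ 1)) : ℝ) := by
      norm_num at hNR ⊢
      exact hNR
    constructor
    · calc (1.5 : ℝ) ^ (((1:ℕ) : ℝ) - 2) < 1 :=
            Real.rpow_lt_one_of_one_lt_of_neg (by norm_num) (by norm_num)
      _ ≤ _ := hge
    · calc (2 : ℝ) ^ (0.58 * (((1:ℕ) : ℝ) - 2)) < 1 :=
            Real.rpow_lt_one_of_one_lt_of_neg (by norm_num) (by norm_num)
      _ ≤ _ := hge
  · obtain ⟨m, rfl⟩ : ∃ m, k = m + 2 := ⟨k - 2, by omega⟩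
    have hx : ((m + 2 : ℕ) : ℝ) - 2 = (m : ℝ) := by push_cast; ring
    have hpow : (1.5 : ℝ) ^ (((m + 2 : ℕ) : ℝ) - 2) = (1.5 : ℝ) ^ m := by
      rw [hx]; exact Real.rpow_natCast _ m
    have hmain : (1.5 : ℝ) ^ (((m + 2 : ℕ) : ℝ) - 2)
        < (Nat.card (CanT1 (2 ^ ((m + 2) / 2)) (2 ^ (m + 2))) : ℝ) := by
      rw [hpow]
      exact lt_of_lt_of_le (chooseBound m) hNR
    refine ⟨hmain, ?_⟩
    have hxnn : (0 : ℝ) ≤ ((m + 2 : ℕ) : ℝ) - 2 := by rw [hx]; positivity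
    calc (2 : ℝ) ^ (0.58 * (((m + 2 : ℕ) : ℝ) - 2))
        = ((2 : ℝ) ^ (0.58 : ℝ)) ^ (((m + 2 : ℕ) : ℝ) - 2) := by
          rw [← Real.rpow_mul (by norm_num)]
      _ ≤ (1.5 : ℝ) ^ (((m + 2 : ℕ) : ℝ) - 2) :=
          Real.rpow_le_rpow (le_of_lt (Real.rpow_pos_of_pos two_pos _)) h58 hxnn
      _ < _ := hmain
end

section
/- For every k ≥ 1, |T(2^(⌈(k+1)/2⌉), [2^(k+1)])| satisfies the recurrence: if k+1 is even then |T(2^((k+1)/2), [2^(k+1)])| = 2·|T(2^⌊k/2⌋, [2^k])|, and in all cases |T(2^⌊(k+1)/2⌋, [2^(k+1)])| = |T(2^⌊(k+1)/2⌋, [2^k])| + |T(2^(⌊(k+1)/2⌋−1), [2^k])|. -/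
open Finset Pointwise

section TilingAux

open Polynomial

abbrev F2 := ZMod 2

/-- The indicator polynomial of a finset of nonnegative integers. -/
noncomputable def PS (S : Finset ℤ) : F2[X] := ∑ a ∈ S, X ^ a.toNat

lemma coeff_PS {S : Finset ℤ} (hS : ∀ a ∈ S, 0 ≤ a) (n : ℕ) :
    (PS S).coeff n = if (n : ℤ) ∈ S then 1 else 0 := by
  rw [PS, finset_sum_coeff]
  rw [Finset.sum_congr rfl (g := fun a => if a = (n : ℤ) then (1:F2) else 0)
    (fun a ha => by
      rw [coeff_X_pow]
      have h0 := hS a ha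
      congr 1
      exact propext (by omega))]
  exact Finset.sum_ite_eq' S (n : ℤ) (fun _ => (1:F2))

lemma support_PS {S : Finset ℤ} (hS : ∀ a ∈ S, 0 ≤ a) :
    (PS S).support = S.image Int.toNat := by
  ext n
  simp only [Polynomial.mem_support_iff, coeff_PS hS, Finset.mem_image]
  constructor
  · intro h
    by_cases hn : (n : ℤ) ∈ S
    · exact ⟨n, hn, by simp⟩
    · simp [hn] at h
  · rintro ⟨a, ha, rfl⟩
    have : ((a.toNat : ℤ)) = a := Int.toNat_of_nonneg (hS a ha)
    rw [this]
    simp [ha]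

lemma recover_PS {S : Finset ℤ} (hS : ∀ a ∈ S, 0 ≤ a) :
    (PS S).support.image (Nat.cast : ℕ → ℤ) = S := by
  rw [support_PS hS, Finset.image_image]
  ext a
  simp only [Finset.mem_image, Function.comp_apply]
  constructor
  · rintro ⟨b, hb, rfl⟩
    rwa [Int.toNat_of_nonneg (hS b hb)]
  · intro ha
    exact ⟨a, ha, Int.toNat_of_nonneg (hS a ha)⟩

lemma card_support_PS {S : Finset ℤ} (hS : ∀ a ∈ S, 0 ≤ a) :
    (PS S).support.card = S.card := by
  rw [support_PS hS]
  exact Finset.card_image_of_injOn (fun a ha b hb hab => by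
    have := hS a (by simpa using ha); have := hS b (by simpa using hb); omega)

lemma sum_range_double (k : ℕ) (x : F2[X]) :
    ∑ i ∈ range (2 * k), x ^ i = (1 + x ^ k) * ∑ i ∈ range k, x ^ i := by
  have h : 2 * k = k + k := by ring
  rw [h, Finset.sum_range_add]
  rw [add_mul, one_mul, Finset.mul_sum]
  congr 1
  exact Finset.sum_congr rfl fun i _ => by rw [pow_add]

lemma geom_eq (m : ℕ) :
    ∑ i ∈ range (2 ^ m), (X : F2[X]) ^ i = (1 + X) ^ (2 ^ m - 1) := by
  induction m with
  | zero => simp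
  | succ m ih =>
    have h2 : (2:ℕ) ^ (m+1) = 2 * 2 ^ m := by ring
    rw [h2, sum_range_double, ih]
    have hc : ((1 : F2[X]) + X) ^ (2 ^ m) = 1 + X ^ (2 ^ m) := by
      rw [add_pow_char_pow]
      simp
    have harith : 2 * 2 ^ m - 1 = (2 ^ m - 1) + 2 ^ m := by
      have := Nat.one_le_two_pow (n := m); omega
    rw [harith, pow_add, hc]
    ring

lemma Icc_eq_image (N : ℕ) :
    Finset.Icc (1:ℤ) (N:ℤ) = (Finset.range N).image (fun n : ℕ => (n:ℤ) + 1) := by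
  ext a
  simp only [Finset.mem_Icc, Finset.mem_image, Finset.mem_range]
  constructor
  · intro ⟨h1, h2⟩
    exact ⟨(a-1).toNat, by omega, by omega⟩
  · rintro ⟨n, hn, rfl⟩; omega

lemma PS_Icc (N : ℕ) : PS (Finset.Icc 1 (N:ℤ)) = X * ∑ i ∈ range N, (X : F2[X]) ^ i := by
  rw [PS, Icc_eq_image, Finset.sum_image (by intro x _ y _ h; have h' : (x:ℤ) + 1 = (y:ℤ) + 1 := h; omega)]
  rw [Finset.mul_sum]
  exact Finset.sum_congr rfl fun i _ => by
    have : ((i:ℤ) + 1).toNat = i + 1 := by omega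
    rw [this, pow_succ]; ring

lemma PS_mul {A B : Finset ℤ} {N : ℕ}
    (hsum : A + B = Finset.Icc 1 (N:ℤ))
    (hcard : (Finset.Icc 1 (N:ℤ)).card = A.card * B.card)
    (hA : ∀ a ∈ A, 0 ≤ a) (hB : ∀ b ∈ B, 0 ≤ b) :
    PS A * PS B = PS (Finset.Icc 1 (N:ℤ)) := by
  have himg : (A ×ˢ B).image (fun p : ℤ × ℤ => p.1 + p.2) = A + B :=
    Finset.image_add_product
  have hinj : Set.InjOn (fun p : ℤ × ℤ => p.1 + p.2) ((A : Set ℤ) ×ˢ (B : Set ℤ)) := by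
    rw [← Finset.card_add_iff, hsum, ← hcard]
  rw [PS, PS, Finset.sum_mul_sum]
  have : ∀ p ∈ A ×ˢ B, (X:F2[X]) ^ (p.1).toNat * X ^ (p.2).toNat
      = X ^ ((p.1 + p.2).toNat) := by
    rintro ⟨a, b⟩ hp
    rw [Finset.mem_product] at hp
    have := hA a hp.1; have := hB b hp.2
    rw [← pow_add]
    congr 1
    omega
  rw [← Finset.sum_product', Finset.sum_congr rfl this]
  rw [PS, ← hsum, ← himg]
  rw [Finset.sum_image (fun x hx y hy h => hinj (by simpa using hx) (by simpa using hy) h)]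

lemma onePX_monic : ((1:F2[X]) + X).Monic := by
  have : ((1:F2[X]) + X) = X + Polynomial.C 1 := by simp [add_comm]
  rw [this]; exact monic_X_add_C 1

lemma onePX_natDegree_pow (s : ℕ) : (((1:F2[X]) + X) ^ s).natDegree = s := by
  rw [onePX_monic.natDegree_pow]
  have : ((1:F2[X]) + X) = X + Polynomial.C 1 := by simp [add_comm]
  rw [this, natDegree_X_add_C, mul_one]

lemma onePX_prime : Prime ((1:F2[X]) + X) := by
  apply Polynomial.Monic.prime_of_degree_eq_one _ onePX_monic
  have : ((1:F2[X]) + X) = X + Polynomial.C 1 := by simp [add_comm]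
  rw [this]; exact degree_X_add_C (1:F2)

noncomputable def fw (s : ℕ) : ℕ := (((1:F2[X]) + X) ^ s).support.card

lemma support_X_pow_mul (k : ℕ) (p : F2[X]) :
    ((X:F2[X]) ^ k * p).support = p.support.image (fun n => k + n) := by
  ext n
  simp only [Polynomial.mem_support_iff, Finset.mem_image, coeff_X_pow_mul']
  constructor
  · intro h
    by_cases hk : k ≤ n
    · simp only [hk, if_true] at h; exact ⟨n - k, h, by omega⟩
    · simp [hk] at h
  · rintro ⟨m, hm, rfl⟩
    simpa using hm

lemma onePX_pow_ne_zero (s : ℕ) : ((1:F2[X]) + X) ^ s ≠ 0 :=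
  pow_ne_zero s onePX_monic.ne_zero

lemma fw_zero : fw 0 = 1 := by
  have h1 : ((1:F2[X]) + X) ^ 0 = Polynomial.C 1 := by simp
  rw [fw, h1, Polynomial.support_C one_ne_zero, Finset.card_singleton]

lemma fw_pos (s : ℕ) : 1 ≤ fw s := by
  rw [fw]
  exact Finset.card_pos.mpr (Polynomial.support_nonempty.mpr (onePX_pow_ne_zero s))

lemma fw_double {e s : ℕ} (h : s < 2 ^ e) : fw (2 ^ e + s) = 2 * fw s := by
  set p := ((1:F2[X]) + X) ^ s with hp
  have hdeg : p.natDegree = s := onePX_natDegree_pow s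
  have hsupp_lt : ∀ n ∈ p.support, n < 2 ^ e := fun n hn =>
    lt_of_le_of_lt (le_natDegree_of_mem_supp n hn) (hdeg ▸ h)
  have hq : ((1:F2[X]) + X) ^ (2 ^ e + s) = p + X ^ (2 ^ e) * p := by
    rw [pow_add, add_pow_char_pow]
    ring
  have hXp : ((X:F2[X]) ^ (2 ^ e) * p).support = p.support.image (fun n => 2 ^ e + n) :=
    support_X_pow_mul _ p
  have hsub : (p + X ^ (2 ^ e) * p).support = p.support ∪ (X ^ (2^e) * p).support := by
    apply Finset.Subset.antisymm (Polynomial.support_add)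
    intro n hn
    rw [Finset.mem_union] at hn
    rw [Polynomial.mem_support_iff, Polynomial.coeff_add]
    rcases hn with hn | hn
    · have h2 : ((X:F2[X]) ^ (2 ^ e) * p).coeff n = 0 := by
        rw [Polynomial.notMem_support_iff.mp]
        intro hmem
        rw [hXp, Finset.mem_image] at hmem
        obtain ⟨m, hm, hnm⟩ := hmem
        exact absurd (hsupp_lt n hn) (by omega)
      rw [h2, add_zero]
      exact Polynomial.mem_support_iff.mp hn
    · have h1 : p.coeff n = 0 := by
        rw [hXp, Finset.mem_image] at hn
        obtain ⟨m, hm, hnm⟩ := hn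
        apply Polynomial.notMem_support_iff.mp
        intro hmem
        exact absurd (hsupp_lt n hmem) (by omega)
      rw [h1, zero_add]
      exact Polynomial.mem_support_iff.mp hn
  have hdisj : Disjoint p.support ((X ^ (2^e) * p).support) := by
    rw [hXp]
    rw [Finset.disjoint_left]
    intro n hn hn2
    rw [Finset.mem_image] at hn2
    obtain ⟨m, hm, hnm⟩ := hn2
    exact absurd (hsupp_lt n hn) (by omega)
  rw [fw, hq, hsub, Finset.card_union_of_disjoint hdisj, hXp,
    Finset.card_image_of_injective _ (fun a b hab => by omega)]
  rw [fw, ← hp]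
  ring

lemma fw_compl : ∀ m s t : ℕ, s + t = 2 ^ m - 1 → fw s * fw t = 2 ^ m := by
  intro m
  induction m with
  | zero =>
    intro s t h
    obtain ⟨rfl, rfl⟩ : s = 0 ∧ t = 0 := by omega
    simp [fw_zero]
  | succ m ih =>
    intro s t h
    rw [pow_succ] at h ⊢
    have h1 : (1:ℕ) ≤ 2 ^ m := Nat.one_le_two_pow
    rcases lt_or_ge s (2 ^ m) with hs | hs
    · have ht : t = 2 ^ m + (2 ^ m - 1 - s) := by omega
      rw [ht, fw_double (by omega)]
      have hih := ih s (2 ^ m - 1 - s) (by omega)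
      calc fw s * (2 * fw (2 ^ m - 1 - s)) = fw s * fw (2 ^ m - 1 - s) * 2 := by ring
        _ = 2 ^ m * 2 := by rw [hih]
    · have hs2 : s = 2 ^ m + (s - 2 ^ m) := by omega
      have hlt : s - 2 ^ m < 2 ^ m := by omega
      rw [hs2, fw_double hlt]
      have hih := ih (s - 2 ^ m) t (by omega)
      calc 2 * fw (s - 2 ^ m) * fw t = fw (s - 2 ^ m) * fw t * 2 := by ring
        _ = 2 ^ m * 2 := by rw [hih]

lemma count_fw (m a : ℕ) :
    ((Finset.range (2 ^ m)).filter (fun s => fw s = 2 ^ a)).card = m.choose a := by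
  induction m generalizing a with
  | zero =>
    cases a with
    | zero => simp [Finset.filter_singleton, fw_zero]
    | succ a =>
      rw [Nat.choose_zero_succ]
      rw [Finset.card_eq_zero, Finset.filter_eq_empty_iff]
      intro s hs
      simp only [pow_zero, Finset.mem_range, Nat.lt_one_iff] at hs
      subst hs
      rw [fw_zero]
      have : 2 ≤ 2 ^ (a+1) := Nat.one_lt_two_pow (by omega)
      omega
  | succ m ih =>
    have hsplit : Finset.range (2 ^ (m+1)) =
        Finset.range (2 ^ m) ∪ (Finset.range (2 ^ m)).image (fun s => 2 ^ m + s) := by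
      ext n
      simp only [Finset.mem_union, Finset.mem_range, Finset.mem_image, pow_succ]
      constructor
      · intro hn
        rcases lt_or_ge n (2 ^ m) with h | h
        · exact Or.inl h
        · exact Or.inr ⟨n - 2 ^ m, by omega, by omega⟩
      · rintro (h | ⟨k, hk, rfl⟩) <;> omega
    have hdisj : Disjoint (Finset.range (2 ^ m))
        ((Finset.range (2 ^ m)).image (fun s => 2 ^ m + s)) := by
      rw [Finset.disjoint_left]
      intro n hn hn2
      rw [Finset.mem_range] at hn
      rw [Finset.mem_image] at hn2
      obtain ⟨k, _, rfl⟩ := hn2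
      omega
    rw [hsplit, Finset.filter_union, Finset.card_union_of_disjoint
      (Finset.disjoint_filter_filter hdisj)]
    rw [Finset.filter_image]
    have himgcond : (Finset.range (2 ^ m)).filter (fun s => fw (2 ^ m + s) = 2 ^ a)
        = (Finset.range (2 ^ m)).filter (fun s => 2 * fw s = 2 ^ a) := by
      apply Finset.filter_congr
      intro s hs
      rw [Finset.mem_range] at hs
      rw [fw_double hs]
    rw [himgcond]
    cases a with
    | zero =>
      have hempty : (Finset.range (2 ^ m)).filter (fun s => 2 * fw s = 2 ^ 0) = ∅ := by
        rw [Finset.filter_eq_empty_iff]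
        intro s _
        have := fw_pos s
        simp only [pow_zero]
        omega
      rw [hempty, ih 0]
      simp
    | succ a =>
      have hcond : (Finset.range (2 ^ m)).filter (fun s => 2 * fw s = 2 ^ (a+1))
          = (Finset.range (2 ^ m)).filter (fun s => fw s = 2 ^ a) := by
        apply Finset.filter_congr
        intro s _
        rw [pow_succ]
        constructor <;> intro h <;> omega
      rw [hcond, Finset.card_image_of_injective _ (fun x y h => by omega), ih (a+1), ih a,
        Nat.choose_succ_succ]
      simp only [Nat.succ_eq_add_one]
      omega

lemma zmod2_eq_one {r : F2} (h : r ≠ 0) : r = 1 := by revert h; revert r; decide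

lemma support_mul_subset (p q : F2[X]) : (p * q).support ⊆ p.support + q.support := by
  intro n hn
  rw [Polynomial.mem_support_iff, Polynomial.coeff_mul] at hn
  obtain ⟨⟨u, v⟩, hmem, hne⟩ := Finset.exists_ne_zero_of_sum_ne_zero hn
  rw [Finset.HasAntidiagonal.mem_antidiagonal] at hmem
  have hu : u ∈ p.support := Polynomial.mem_support_iff.mpr (left_ne_zero_of_mul hne)
  have hv : v ∈ q.support := Polynomial.mem_support_iff.mpr (right_ne_zero_of_mul hne)
  rw [← hmem]
  exact Finset.add_mem_add hu hv

lemma supp_XonePX (s : ℕ) :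
    ((X:F2[X]) * ((1:F2[X]) + X) ^ s).support
      = (((1:F2[X]) + X) ^ s).support.image (fun n => 1 + n) := by
  rw [← pow_one (X : F2[X]), support_X_pow_mul]

lemma card_supp_XonePX (s : ℕ) :
    ((X:F2[X]) * ((1:F2[X]) + X) ^ s).support.card = fw s := by
  rw [supp_XonePX, Finset.card_image_of_injective _ (fun x y h => by omega)]
  rfl

lemma PS_image (p : F2[X]) : PS (p.support.image (Nat.cast : ℕ → ℤ)) = p := by
  rw [PS, Finset.sum_image (by intro x _ y _ h; exact_mod_cast h)]
  conv_rhs => rw [p.as_sum_support]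
  apply Finset.sum_congr rfl
  intro n hn
  have h1 : p.coeff n = 1 := zmod2_eq_one (Polynomial.mem_support_iff.mp hn)
  rw [Int.toNat_natCast, h1, X_pow_eq_monomial]

lemma exists_factor {A B : Finset ℤ} {m : ℕ}
    (hsum : A + B = Finset.Icc 1 ((2 ^ m : ℕ) : ℤ))
    (hcard : (Finset.Icc 1 ((2 ^ m : ℕ) : ℤ)).card = A.card * B.card)
    (hB0 : (0:ℤ) ∈ B) (hB : ∀ b ∈ B, 0 ≤ b) :
    ∃ s ≤ 2 ^ m - 1, PS A = X * ((1:F2[X]) + X) ^ s ∧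
      PS B = ((1:F2[X]) + X) ^ (2 ^ m - 1 - s) := by
  have hAsub : A ⊆ Finset.Icc 1 ((2 ^ m : ℕ) : ℤ) := by
    intro a ha
    rw [← hsum]
    simpa using Finset.add_mem_add ha hB0
  have hAnn : ∀ a ∈ A, 0 ≤ a := fun a ha => by
    have := Finset.mem_Icc.mp (hAsub ha); omega
  have key : PS A * PS B = X * ((1:F2[X]) + X) ^ (2 ^ m - 1) := by
    rw [PS_mul hsum hcard hAnn hB, PS_Icc, geom_eq]
  have hXdvd : (X : F2[X]) ∣ PS A := by
    rw [Polynomial.X_dvd_iff, coeff_PS hAnn]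
    have h0 : ((0:ℕ) : ℤ) ∉ A := fun h => by
      have := Finset.mem_Icc.mp (hAsub h); omega
    rw [if_neg h0]
  obtain ⟨Q, hQ⟩ := hXdvd
  have hQB : Q * PS B = ((1:F2[X]) + X) ^ (2 ^ m - 1) := by
    apply mul_left_cancel₀ (Polynomial.X_ne_zero (R := F2))
    rw [← mul_assoc, ← hQ, key]
  obtain ⟨i, hi, u, hu⟩ := (dvd_prime_pow onePX_prime _).mp ⟨PS B, hQB.symm⟩
  obtain ⟨r, hr, hCr⟩ := Polynomial.isUnit_iff.mp u.isUnit
  have hr1 : r = 1 := zmod2_eq_one hr.ne_zero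
  have hQeq : Q = ((1:F2[X]) + X) ^ i := by
    rw [← hu, ← hCr, hr1, Polynomial.C_1, mul_one]
  refine ⟨i, hi, by rw [hQ, hQeq], ?_⟩
  apply mul_left_cancel₀ (onePX_pow_ne_zero i)
  rw [← hQeq, hQB, hQeq, ← pow_add]
  congr 1
  omega

noncomputable def Gmap (m s : ℕ) : Finset ℤ × Finset ℤ :=
  ((((X:F2[X]) * ((1:F2[X]) + X) ^ s).support).image (Nat.cast : ℕ → ℤ),
   ((((1:F2[X]) + X) ^ (2 ^ m - 1 - s)).support).image (Nat.cast : ℕ → ℤ))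

lemma Gmap_mem {m s : ℕ} (hs : s < 2 ^ m) (hfw : fw s = 2 ^ a) :
    Gmap m s ∈ CanT1 (2 ^ a) (2 ^ m) := by
  have h1 : (1:ℕ) ≤ 2 ^ m := Nat.one_le_two_pow
  set t := 2 ^ m - 1 - s with ht
  set pA := (X:F2[X]) * ((1:F2[X]) + X) ^ s with hpA
  set pB := ((1:F2[X]) + X) ^ t with hpB
  have hst : s + t = 2 ^ m - 1 := by omega
  have hprod : pA * pB = PS (Finset.Icc 1 ((2 ^ m : ℕ) : ℤ)) := by
    rw [hpA, hpB, PS_Icc, geom_eq, mul_assoc, ← pow_add, hst]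
  have hmemA : ∀ n ∈ pA.support, 1 ≤ n ∧ n ≤ 1 + s := by
    intro n hn
    rw [hpA, supp_XonePX, Finset.mem_image] at hn
    obtain ⟨u, hu, rfl⟩ := hn
    have := Polynomial.le_natDegree_of_mem_supp u hu
    rw [onePX_natDegree_pow] at this
    omega
  have hmemB : ∀ n ∈ pB.support, n ≤ t := by
    intro n hn
    have := Polynomial.le_natDegree_of_mem_supp n hn
    rwa [hpB, onePX_natDegree_pow] at this
  refine ⟨?_, ?_, ?_, ?_, ?_⟩
  · -- sum condition
    apply Finset.Subset.antisymm
    · intro c hc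
      rw [Finset.mem_add] at hc
      obtain ⟨x, hx, y, hy, rfl⟩ := hc
      simp only [Gmap, Finset.mem_image] at hx hy
      obtain ⟨u, hu, rfl⟩ := hx
      obtain ⟨v, hv, rfl⟩ := hy
      have h2 := hmemA u hu
      have h3 := hmemB v hv
      rw [Finset.mem_Icc]
      have hax1 : (1:ℕ) ≤ u + v := by omega
      have hax2 : u + v ≤ 2 ^ m := by omega
      exact ⟨by exact_mod_cast hax1, by exact_mod_cast hax2⟩
    · intro c hc
      have hc' := Finset.mem_Icc.mp hc
      have hcn : c = ((c.toNat : ℕ) : ℤ) := by omega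
      have hco : c.toNat ∈ (pA * pB).support := by
        rw [hprod, Polynomial.mem_support_iff,
          coeff_PS (fun x hx => by have := Finset.mem_Icc.mp hx; omega)]
        rw [← hcn, if_pos hc]
        exact one_ne_zero
      have := support_mul_subset pA pB hco
      rw [Finset.mem_add] at this
      obtain ⟨u, hu, v, hv, huv⟩ := this
      rw [Finset.mem_add]
      refine ⟨(u : ℤ), Finset.mem_image_of_mem _ hu, (v : ℤ), Finset.mem_image_of_mem _ hv, ?_⟩
      omega
  · rw [Gmap]
    simp only
    rw [Finset.card_image_of_injective _ (fun x y h => by exact_mod_cast h), ← hpA,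
      hpA, card_supp_XonePX, hfw]
  · rw [Gmap]
    simp only
    rw [Finset.card_image_of_injective _ (fun x y h => by exact_mod_cast h),
      Finset.card_image_of_injective _ (fun x y h => by exact_mod_cast h)]
    rw [card_supp_XonePX]
    have : (((1:F2[X]) + X) ^ t).support.card = fw t := rfl
    rw [this]
    rw [Int.card_Icc]
    have : ((2 ^ m : ℕ) : ℤ) + 1 - 1 = ((2 ^ m : ℕ) : ℤ) := by ring
    rw [this, Int.toNat_natCast]
    exact (fw_compl m s t hst).symm
  · rw [Gmap]
    simp only [Finset.mem_image]
    refine ⟨0, ?_, rfl⟩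
    rw [Polynomial.mem_support_iff, Polynomial.coeff_zero_eq_eval_zero]
    simp
  · intro b hb
    rw [Gmap] at hb
    simp only [Finset.mem_image] at hb
    obtain ⟨v, _, rfl⟩ := hb
    exact Int.natCast_nonneg v

lemma CanT1_eq_image (m a : ℕ) :
    CanT1 (2 ^ a) (2 ^ m) =
      (Gmap m) '' (((Finset.range (2 ^ m)).filter (fun s => fw s = 2 ^ a)) : Finset ℕ) := by
  apply Set.Subset.antisymm
  · rintro ⟨A, B⟩ ⟨hsum, hcardA, hcard, hB0, hBnn⟩
    obtain ⟨s, hsle, hfA, hfB⟩ := exists_factor hsum hcard hB0 hBnn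
    have hAsub : A ⊆ Finset.Icc 1 ((2 ^ m : ℕ) : ℤ) := by
      intro x hx
      rw [← hsum]
      simpa using Finset.add_mem_add hx hB0
    have hAnn : ∀ x ∈ A, 0 ≤ x := fun x hx => by
      have := Finset.mem_Icc.mp (hAsub hx); omega
    have hfws : fw s = 2 ^ a := by
      rw [← hcardA, ← card_support_PS hAnn, hfA, card_supp_XonePX]
    refine ⟨s, ?_, ?_⟩
    · simp only [Finset.coe_filter, Set.mem_setOf_eq, Finset.mem_range]
      exact ⟨by have := Nat.one_le_two_pow (n := m); omega, hfws⟩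
    · rw [Gmap]
      have e1 : A = ((X:F2[X]) * ((1:F2[X]) + X) ^ s).support.image (Nat.cast : ℕ → ℤ) := by
        rw [← hfA, recover_PS hAnn]
      have e2 : B = (((1:F2[X]) + X) ^ (2 ^ m - 1 - s)).support.image (Nat.cast : ℕ → ℤ) := by
        rw [← hfB, recover_PS hBnn]
      rw [← e1, ← e2]
  · rintro p ⟨s, hsmem, rfl⟩
    simp only [Finset.coe_filter, Set.mem_setOf_eq, Finset.mem_range] at hsmem
    exact Gmap_mem hsmem.1 hsmem.2

lemma Gmap_injOn (m a : ℕ) :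
    Set.InjOn (Gmap m)
      (((Finset.range (2 ^ m)).filter (fun s => fw s = 2 ^ a)) : Finset ℕ) := by
  intro s1 _ s2 _ h
  have h1 := congrArg Prod.fst h
  simp only [Gmap] at h1
  have h2 : (X:F2[X]) * ((1:F2[X]) + X) ^ s1 = X * ((1:F2[X]) + X) ^ s2 := by
    rw [← PS_image ((X:F2[X]) * ((1:F2[X]) + X) ^ s1), h1, PS_image]
  have h3 : ((1:F2[X]) + X) ^ s1 = ((1:F2[X]) + X) ^ s2 :=
    mul_left_cancel₀ (Polynomial.X_ne_zero (R := F2)) h2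
  have := congrArg Polynomial.natDegree h3
  rwa [onePX_natDegree_pow, onePX_natDegree_pow] at this

lemma card_CanT1_pow (m a : ℕ) : Nat.card (CanT1 (2 ^ a) (2 ^ m)) = m.choose a := by
  rw [Nat.card_coe_set_eq, CanT1_eq_image m a,
    Set.ncard_image_of_injOn (Gmap_injOn m a), Set.ncard_coe_finset, count_fw]

end TilingAux

/-- Recurrence for the number of tilings of `[1, 2^(k+1)]` by tiles of size
`2^⌊(k+1)/2⌋`. -/
theorem tilings_powers_of_two_recurrence (k : ℕ) (hk : 1 ≤ k) :
    (Even (k + 1) →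
      Nat.card (CanT1 (2 ^ ((k + 1) / 2)) (2 ^ (k + 1))) =
        2 * Nat.card (CanT1 (2 ^ (k / 2)) (2 ^ k))) ∧
    Nat.card (CanT1 (2 ^ ((k + 1) / 2)) (2 ^ (k + 1))) =
      Nat.card (CanT1 (2 ^ ((k + 1) / 2)) (2 ^ k)) +
      Nat.card (CanT1 (2 ^ ((k + 1) / 2 - 1)) (2 ^ k)) := by
  simp only [card_CanT1_pow]
  constructor
  · intro hev
    obtain ⟨r, hr⟩ := hev
    have hk2 : k = 2 * r - 1 := by omega
    have hr1 : 1 ≤ r := by omega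
    have e1 : (k + 1) / 2 = r := by omega
    have e2 : k / 2 = r - 1 := by omega
    rw [e1, e2]
    obtain ⟨r', rfl⟩ : ∃ r', r = r' + 1 := ⟨r - 1, by omega⟩
    have hkk : k = 2 * r' + 1 := by omega
    subst hkk
    have hsymm : (2 * r' + 1).choose (r' + 1) = (2 * r' + 1).choose r' := by
      have := Nat.choose_symm (n := 2 * r' + 1) (k := r' + 1) (by omega)
      rw [show 2 * r' + 1 - (r' + 1) = r' by omega] at this
      omega
    rw [Nat.choose_succ_succ]
    simp only [Nat.succ_eq_add_one, Nat.add_sub_cancel]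
    omega
  · obtain ⟨i, hi⟩ : ∃ i, (k + 1) / 2 = i + 1 := ⟨(k + 1) / 2 - 1, by omega⟩
    rw [hi, Nat.choose_succ_succ, Nat.add_sub_cancel]
    simp only [Nat.succ_eq_add_one]
    omega
end

section
/- Fix n and α with α·β = n. For each divisor k_s of α with k_s ≠ α, the number of valid choices of first-rift size k_r (i.e., k_r > 0 with k_s | k_r and (k_s + k_r) | k_s·β) is exactly σ₀(β) − 1, where σ₀ is the number-of-divisors function. -/
open Finset

def validRiftSizes (ks β : ℕ) : Finset ℕ :=
  (range (ks * β + 1)).filter (fun kr => 0 < kr ∧ ks ∣ kr ∧ (ks + kr) ∣ ks * β)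

theorem add_mul_dvd_mul_iff {k : ℕ} (hk : 0 < k) (m β : ℕ) :
    k + k * m ∣ k * β ↔ m + 1 ∣ β := by
  rw [add_comm, ← mul_add_one, mul_dvd_mul_iff_left hk.ne']

/-- Writing `k_r = k_s m`, the rift condition says exactly that `m + 1` is a divisor of `β`
other than `1`. -/
theorem validRiftSizes_eq_image {ks β : ℕ} (hks : 0 < ks) (hβ : 0 < β) :
    validRiftSizes ks β = (β.divisors.erase 1).image (fun d => ks * (d - 1)) := by
  ext kr
  simp only [validRiftSizes, mem_filter, mem_range, mem_image, mem_erase, Nat.mem_divisors]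
  constructor
  · rintro ⟨-, hpos, ⟨m, rfl⟩, hrift⟩
    have hm : m ≠ 0 := by rintro rfl; simp at hpos
    exact ⟨m + 1, ⟨by omega, (add_mul_dvd_mul_iff hks m β).mp hrift, hβ.ne'⟩, by simp⟩
  · rintro ⟨d, ⟨hd1, hdβ, -⟩, rfl⟩
    obtain ⟨m, rfl⟩ : ∃ m, d = m + 1 :=
      Nat.exists_eq_add_one.mpr (Nat.pos_of_dvd_of_pos hdβ hβ)
    have hmβ : m + 1 ≤ β := Nat.le_of_dvd hβ hdβ
    simp only [Nat.add_sub_cancel]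
    refine ⟨Nat.lt_succ_of_le (Nat.mul_le_mul_left _ (by omega)),
      Nat.mul_pos hks (by omega), dvd_mul_right ks m, (add_mul_dvd_mul_iff hks m β).mpr hdβ⟩

theorem injOn_mul_sub_one_divisors {ks : ℕ} (hks : 0 < ks) (β : ℕ) :
    Set.InjOn (fun d => ks * (d - 1)) (β.divisors : Set ℕ) := by
  intro a ha b hb hab
  have ha0 := Nat.pos_of_mem_divisors ha
  have hb0 := Nat.pos_of_mem_divisors hb
  have : a - 1 = b - 1 := Nat.eq_of_mul_eq_mul_left hks hab
  omega

theorem count_valid_rift_sizes_general (β ks : ℕ) (hβ : 0 < β) (hks : 0 < ks) :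
    ((Finset.range (ks * β + 1)).filter
        (fun kr => 0 < kr ∧ ks ∣ kr ∧ (ks + kr) ∣ ks * β)).card =
      β.divisors.card - 1 := by
  change (validRiftSizes ks β).card = _
  rw [validRiftSizes_eq_image hks hβ,
    card_image_of_injOn ((injOn_mul_sub_one_divisors hks β).mono (by simp)),
    card_erase_of_mem (Nat.one_mem_divisors.mpr hβ.ne')]

/-- For each divisor `k_s ≠ α` of `α`, the number of valid first-rift sizes `k_r`
(positive, divisible by `k_s`, with `k_s + k_r` dividing `k_s·β`) is exactly
`σ₀(β) − 1`. -/
theorem count_valid_rift_sizes (n α β ks : ℕ) (hα : 0 < α) (hβ : 0 < β)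
    (hn : α * β = n) (hdvd : ks ∣ α) (hne : ks ≠ α) (hks : 0 < ks) :
    ((Finset.range (ks * β + 1)).filter
        (fun kr => 0 < kr ∧ ks ∣ kr ∧ (ks + kr) ∣ ks * β)).card =
      β.divisors.card - 1 :=
  count_valid_rift_sizes_general β ks hβ hks
end

section
/- For all α, β, n with αβ = n, the number of canonical tilings of [1,n] by tiles of size α is at most (σ₀(α)·σ₀(β) − σ₀(α) − σ₀(β) + 2)^(log₂ n). -/
open Finset Pointwise

noncomputable def tilF (α β : ℕ) : Finset (Finset ℤ × Finset ℤ) :=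
  ((Finset.Icc (0:ℤ) ((α*β : ℕ) - 1)).powerset ×ˢ (Finset.Icc (0:ℤ) ((α*β : ℕ) - 1)).powerset).filter
    (fun p => p.1 + p.2 = Finset.Icc (0:ℤ) ((α*β : ℕ) - 1) ∧ p.1.card = α ∧ p.2.card = β)

lemma mem_tilF {α β : ℕ} {p : Finset ℤ × Finset ℤ} :
    p ∈ tilF α β ↔ p.1 ⊆ Finset.Icc (0:ℤ) ((α*β : ℕ) - 1) ∧
      p.2 ⊆ Finset.Icc (0:ℤ) ((α*β : ℕ) - 1) ∧
      p.1 + p.2 = Finset.Icc (0:ℤ) ((α*β : ℕ) - 1) ∧ p.1.card = α ∧ p.2.card = β := by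
  simp only [tilF, Finset.mem_filter, Finset.mem_product, Finset.mem_powerset]
  tauto

section basic

variable {α β : ℕ} {A B : Finset ℤ}

lemma til_uniq (hα : 1 ≤ α) (hβ : 1 ≤ β)
    (hsum : A + B = Finset.Icc (0:ℤ) ((α*β : ℕ) - 1)) (hA : A.card = α) (hB : B.card = β) :
    ∀ a ∈ A, ∀ b ∈ B, ∀ a' ∈ A, ∀ b' ∈ B, a + b = a' + b' → a = a' ∧ b = b' := by
  have hcards : (A ×ˢ B).card = (Finset.Icc (0:ℤ) ((α*β : ℕ) - 1)).card := by
    rw [Finset.card_product, hA, hB, Int.card_Icc]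
    omega
  have hinj := Finset.inj_on_of_surj_on_of_card_le
    (s := A ×ˢ B) (t := Finset.Icc (0:ℤ) ((α*β : ℕ) - 1))
    (fun p _ => p.1 + p.2)
    (fun p hp => by
      rw [← hsum]
      rw [Finset.mem_product] at hp
      exact Finset.add_mem_add hp.1 hp.2)
    (fun y hy => by
      rw [← hsum, Finset.mem_add] at hy
      obtain ⟨a, ha, b, hb, hab⟩ := hy
      exact ⟨(a, b), Finset.mem_product.2 ⟨ha, hb⟩, hab⟩)
    (le_of_eq hcards)
  intro a ha b hb a' ha' b' hb' h
  have := hinj (a₁ := (a, b)) (Finset.mem_product.2 ⟨ha, hb⟩)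
    (a₂ := (a', b')) (Finset.mem_product.2 ⟨ha', hb'⟩) h
  exact ⟨congrArg Prod.fst this, congrArg Prod.snd this⟩

lemma til_zero (hα : 1 ≤ α) (hβ : 1 ≤ β)
    (hAs : A ⊆ Finset.Icc (0:ℤ) ((α*β : ℕ) - 1)) (hBs : B ⊆ Finset.Icc (0:ℤ) ((α*β : ℕ) - 1))
    (hsum : A + B = Finset.Icc (0:ℤ) ((α*β : ℕ) - 1)) :
    (0:ℤ) ∈ A ∧ (0:ℤ) ∈ B := by
  have hm : (1 : ℤ) ≤ (α*β : ℕ) := by exact_mod_cast Nat.one_le_iff_ne_zero.2 (by positivity)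
  have h0 : (0:ℤ) ∈ Finset.Icc (0:ℤ) ((α*β : ℕ) - 1) := by
    rw [Finset.mem_Icc]; omega
  rw [← hsum, Finset.mem_add] at h0
  obtain ⟨a, ha, b, hb, hab⟩ := h0
  have ha' := Finset.mem_Icc.1 (hAs ha)
  have hb' := Finset.mem_Icc.1 (hBs hb)
  have : a = 0 ∧ b = 0 := by omega
  exact ⟨this.1 ▸ ha, this.2 ▸ hb⟩

lemma tilF_swap {p : Finset ℤ × Finset ℤ} (h : p ∈ tilF α β) : (p.2, p.1) ∈ tilF β α := by
  rw [mem_tilF] at h ⊢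
  rw [mul_comm β α]
  exact ⟨h.2.1, h.1, by rw [add_comm]; exact h.2.2.1, h.2.2.2.2, h.2.2.2.1⟩

lemma tilF_one_left_eq {β : ℕ} {p : Finset ℤ × Finset ℤ} (hp : p ∈ tilF 1 β) :
    p = ({0}, Finset.Icc (0:ℤ) ((1*β : ℕ) - 1)) := by
  rw [mem_tilF] at hp
  obtain ⟨hAs, hBs, hsum, hA, hB⟩ := hp
  rcases Nat.eq_zero_or_pos β with h0 | hβ
  · exfalso
    have : Finset.Icc (0:ℤ) ((1*β : ℕ) - 1) = ∅ := by
      apply Finset.Icc_eq_empty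
      simp [h0]
    rw [this, Finset.subset_empty] at hAs
    rw [hAs] at hA
    simp at hA
  · have h0 := til_zero le_rfl hβ hAs hBs hsum
    have hA1 : p.1 = {0} := by
      obtain ⟨a, ha⟩ := Finset.card_eq_one.1 hA
      rw [ha] at h0
      rw [Finset.mem_singleton] at h0
      rw [ha, ← h0.1]
    have hB1 : p.2 = Finset.Icc (0:ℤ) ((1*β : ℕ) - 1) := by
      rw [← hsum, hA1]
      have : ({0} : Finset ℤ) = (0 : Finset ℤ) := rfl
      rw [this, zero_add]
    exact Prod.ext hA1 hB1

lemma tilF_card_one_left (β : ℕ) : (tilF 1 β).card ≤ 1 :=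
  Finset.card_le_one.2 (fun p hp q hq => (tilF_one_left_eq hp).trans (tilF_one_left_eq hq).symm)

end basic

section reduce

variable {α β : ℕ} {A B : Finset ℤ}

lemma reduceA (hα : 1 ≤ α) (hβ : 2 ≤ β)
    (hmem : (A, B) ∈ tilF α β) (h1 : (1:ℤ) ∈ A) :
    ∃ d ∈ α.divisors.erase 1, ∃ q ∈ tilF (α / d) β,
      A = q.1.image (fun x => (d:ℤ) * x) + Finset.Icc (0:ℤ) ((d:ℤ) - 1) ∧
      B = q.2.image (fun x => (d:ℤ) * x) := by
  rw [mem_tilF] at hmem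
  obtain ⟨hAs, hBs, hsum, hcA, hcB⟩ := hmem
  simp only at hAs hBs hsum hcA hcB
  set m : ℤ := ((α*β : ℕ) : ℤ) with hm
  have hβ1 : 1 ≤ β := le_trans one_le_two hβ
  have huniq := til_uniq hα hβ1 hsum hcA hcB
  obtain ⟨h0A, h0B⟩ := til_zero hα hβ1 hAs hBs hsum
  have hnnA : ∀ a ∈ A, 0 ≤ a ∧ a ≤ m - 1 := fun a ha => Finset.mem_Icc.1 (hAs ha)
  have hnnB : ∀ b ∈ B, 0 ≤ b ∧ b ≤ m - 1 := fun b hb => Finset.mem_Icc.1 (hBs hb)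
  have hrep : ∀ x : ℤ, 0 ≤ x → x ≤ m - 1 → ∃ a ∈ A, ∃ b ∈ B, a + b = x := by
    intro x h0 h1'
    have : x ∈ A + B := by rw [hsum, Finset.mem_Icc]; exact ⟨h0, h1'⟩
    rwa [Finset.mem_add] at this
  -- positive element of B
  have hcard2 : 1 < B.card := by rw [hcB]; omega
  obtain ⟨b₀, hb₀B, hb₀⟩ := Finset.exists_mem_ne hcard2 0
  have hb₀pos : 0 < b₀ := lt_of_le_of_ne (hnnB b₀ hb₀B).1 (Ne.symm hb₀)
  have hPne : (B.filter (fun b => 0 < b)).Nonempty :=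
    ⟨b₀, Finset.mem_filter.2 ⟨hb₀B, hb₀pos⟩⟩
  set d : ℤ := (B.filter (fun b => 0 < b)).min' hPne with hd
  have hdBpos : d ∈ B ∧ 0 < d := by
    have := (B.filter (fun b => 0 < b)).min'_mem hPne
    rw [Finset.mem_filter] at this
    exact this
  have hdB := hdBpos.1
  have hdpos := hdBpos.2
  have hdmin : ∀ b ∈ B, 0 < b → d ≤ b := fun b hb hbp =>
    Finset.min'_le _ b (Finset.mem_filter.2 ⟨hb, hbp⟩)
  have hd2 : 2 ≤ d := by
    rcases lt_or_ge d 2 with h | h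
    · exfalso
      have hd1 : d = 1 := by omega
      have := huniq 1 h1 0 h0B 0 h0A 1 (hd1 ▸ hdB) (by ring)
      omega
    · exact h
  have hdm : d ≤ m - 1 := (hnnB d hdB).2
  have hIccA : ∀ x : ℤ, 0 ≤ x → x ≤ d - 1 → x ∈ A := by
    intro x hx0 hx1
    obtain ⟨a, ha, b, hb, hab⟩ := hrep x hx0 (by omega)
    have hb0 := (hnnB b hb).1
    have ha0 := (hnnA a ha).1
    rcases eq_or_lt_of_le hb0 with h | h
    · have : a = x := by omega
      exact this ▸ ha
    · exfalso
      have := hdmin b hb h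
      omega
  -- main structure induction
  have T : ∀ k : ℕ, (((k:ℤ)) ∈ B → d ∣ (k:ℤ)) ∧ (((k:ℤ)) ∈ A ↔ ((k:ℤ)) - ((k:ℤ)) % d ∈ A) := by
    intro k
    induction k using Nat.strong_induction_on with
    | _ k ih =>
    have ihB : ∀ y : ℤ, 0 ≤ y → y < (k:ℤ) → y ∈ B → d ∣ y := by
      intro y h0 hk hy
      have h' := (ih y.toNat (by omega)).1
      rw [Int.toNat_of_nonneg h0] at h'
      exact h' hy
    have ihA : ∀ y : ℤ, 0 ≤ y → y < (k:ℤ) → (y ∈ A ↔ y - y % d ∈ A) := by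
      intro y h0 hk
      have h' := (ih y.toNat (by omega)).2
      rwa [Int.toNat_of_nonneg h0] at h'
    set x : ℤ := (k:ℤ) with hxdef
    have hx0 : 0 ≤ x := Int.natCast_nonneg k
    set s : ℤ := x % d with hs
    have hs0 : 0 ≤ s := Int.emod_nonneg _ (by omega)
    have hsd : s < d := Int.emod_lt_of_pos _ (by omega)
    have hdvdh : d ∣ x - s := ⟨x / d, by rw [hs, Int.emod_def]; ring⟩
    have hxs : 0 ≤ x - s := by
      have h1 := Int.ediv_nonneg hx0 (le_of_lt hdpos)
      have h2 : x - s = d * (x / d) := by rw [hs, Int.emod_def]; ring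
      rw [h2]; exact mul_nonneg (by omega) h1
    -- full block below x, from a head in A
    have blockIH : ∀ a : ℤ, 0 ≤ a → d ∣ a → a ∈ A → ∀ t : ℤ, 0 ≤ t → t < d →
        a + t < x → a + t ∈ A := by
      intro a h0 hdvd haA t ht0 htd hlt
      have hmod : (a + t) % d = t := by
        obtain ⟨u, rfl⟩ := hdvd
        rw [add_comm (d*u) t, Int.add_mul_emod_self_left, Int.emod_eq_of_lt ht0 htd]
      have := ihA (a + t) (by omega) hlt
      rw [hmod] at this
      simpa using this.2 (by simpa using haA)
    have hTB : x ∈ B → d ∣ x := by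
      intro hxB
      rcases eq_or_ne s 0 with h | h
      · exact Int.dvd_of_emod_eq_zero h
      exfalso
      have hxpos : 0 < x := by
        rcases eq_or_lt_of_le hx0 with h' | h'
        · exfalso; apply h; rw [hs, ← h']; simp
        · exact h'
      have hdx : d ≤ x := hdmin x hxB hxpos
      have hdx' : d < x := by
        rcases eq_or_lt_of_le hdx with h' | h'
        · exfalso; apply h; rw [hs, h']; simp [Int.emod_self]
        · exact h'
      have hxm : x ≤ m - 1 := (hnnB x hxB).2
      obtain ⟨a, haA, b, hbB, hab⟩ := hrep (x - s) (by omega) (by omega)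
      have hb0 := (hnnB b hbB).1
      have ha0 := (hnnA a haA).1
      have hblt : b < x := by omega
      have hdb : d ∣ b := ihB b hb0 hblt hbB
      have hda : d ∣ a := by
        have : a = (x - s) - b := by omega
        rw [this]; exact dvd_sub hdvdh hdb
      rcases eq_or_lt_of_le hb0 with h' | h'
      · -- b = 0, a = x - s ∈ A; pairs (x-s, d) and (d-s, x)
        have haxs : a = x - s := by omega
        have hds_mem : d - s ∈ A := hIccA (d - s) (by omega) (by omega)
        have := huniq a haA d hdB (d - s) hds_mem x hxB (by omega)
        omega
      · have hbd : d ≤ b := hdmin b hbB h'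
        have has : a + s ∈ A := blockIH a ha0 hda haA s hs0 hsd (by omega)
        have := huniq (a + s) has b hbB 0 h0A x hxB (by omega)
        omega
    refine ⟨hTB, ?_, ?_⟩
    · -- x ∈ A → x - s ∈ A
      intro hxA
      rcases eq_or_ne s 0 with h | h
      · rw [h]; simpa using hxA
      have hxm : x ≤ m - 1 := (hnnA x hxA).2
      obtain ⟨a, haA, b, hbB, hab⟩ := hrep (x - s) (by omega) (by omega)
      have hb0 := (hnnB b hbB).1
      have ha0 := (hnnA a haA).1
      rcases eq_or_lt_of_le hb0 with h' | h'
      · have : a = x - s := by omega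
        exact this ▸ haA
      · exfalso
        have hbd : d ≤ b := hdmin b hbB h'
        have hblt : b < x := by omega
        have hdb : d ∣ b := ihB b hb0 hblt hbB
        have hda : d ∣ a := by
          have : a = (x - s) - b := by omega
          rw [this]; exact dvd_sub hdvdh hdb
        have has : a + s ∈ A := blockIH a ha0 hda haA s hs0 hsd (by omega)
        have := huniq (a + s) has b hbB x hxA 0 h0B (by omega)
        omega
    · -- x - s ∈ A → x ∈ A
      intro hhA
      rcases eq_or_ne s 0 with h | h
      · rw [h] at hhA; simpa using hhA
      have hxm : x ≤ m - 1 := by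
        have : (x - s) + d ∈ A + B := Finset.add_mem_add hhA hdB
        rw [hsum, Finset.mem_Icc] at this
        omega
      obtain ⟨a, haA, b, hbB, hab⟩ := hrep x hx0 hxm
      have hb0 := (hnnB b hbB).1
      have ha0 := (hnnA a haA).1
      rcases eq_or_lt_of_le hb0 with h' | h'
      · have : a = x := by omega
        exact this ▸ haA
      exfalso
      have hbd : d ≤ b := hdmin b hbB h'
      have hbx : b < x := by
        rcases eq_or_lt_of_le (show b ≤ x by omega) with h'' | h''
        · exfalso
          have : x ∈ B := h'' ▸ hbB
          have := hTB this
          exact h (by rw [hs]; exact Int.emod_eq_zero_of_dvd this)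
        · exact h''
      have hdb : d ∣ b := ihB b hb0 hbx hbB
      have hamod : a % d = s := by
        obtain ⟨v, hv⟩ := hdb
        have h3 : a = x + d * (-v) := by rw [← hab, hv]; ring
        rw [h3, Int.add_mul_emod_self_left, hs]
      have halt : a < x := by omega
      have hheada : a - s ∈ A := by
        have := (ihA a ha0 halt).1 haA
        rwa [hamod] at this
      have := huniq (a - s) hheada b hbB (x - s) hhA 0 h0B (by omega)
      omega
  -- lift T to convenient forms
  have hTB' : ∀ b ∈ B, d ∣ b := by
    intro b hb
    have h0 := (hnnB b hb).1
    have h' := (T b.toNat).1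
    rw [Int.toNat_of_nonneg h0] at h'
    exact h' hb
  have hhead : ∀ a ∈ A, a - a % d ∈ A := by
    intro a ha
    have h0 := (hnnA a ha).1
    have h' := (T a.toNat).2
    rw [Int.toNat_of_nonneg h0] at h'
    exact h'.1 ha
  have hheadrev : ∀ y : ℤ, 0 ≤ y → y - y % d ∈ A → y ∈ A := by
    intro y h0 hy
    have h' := (T y.toNat).2
    rw [Int.toNat_of_nonneg h0] at h'
    exact h'.2 hy
  have hfull : ∀ a ∈ A, ∀ t : ℤ, 0 ≤ t → t < d → a - a % d + t ∈ A := by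
    intro a ha t ht0 htd
    have h0 := (hnnA a ha).1
    have hdvd : d ∣ a - a % d := ⟨a / d, by rw [Int.emod_def]; ring⟩
    have hu0 : 0 ≤ a - a % d := by
      have h1 := Int.ediv_nonneg h0 (le_of_lt hdpos)
      have h2 : a - a % d = d * (a / d) := by rw [Int.emod_def]; ring
      rw [h2]; exact mul_nonneg (by omega) h1
    obtain ⟨u, hu⟩ := hdvd
    have hymod : (a - a % d + t) % d = t := by
      rw [hu, add_comm (d*u) t, Int.add_mul_emod_self_left, Int.emod_eq_of_lt ht0 htd]
    apply hheadrev _ (by omega)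
    rw [hymod]
    have he : a - a % d + t - t = a - a % d := by ring
    rw [he]
    exact hhead a ha
  set A₀ : Finset ℤ := A.filter (fun a => a % d = 0) with hA₀
  have hA0mem : ∀ a : ℤ, a ∈ A₀ ↔ a ∈ A ∧ a % d = 0 := fun a => Finset.mem_filter
  have hheadmem : ∀ a ∈ A, a - a % d ∈ A₀ := by
    intro a ha
    refine (hA0mem _).2 ⟨hhead a ha, ?_⟩
    have he : a - a % d = d * (a / d) := by rw [Int.emod_def]; ring
    rw [he]; exact Int.mul_emod_right _ _
  have hAeq : A = A₀ + Finset.Icc (0:ℤ) (d - 1) := by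
    ext x
    constructor
    · intro hx
      rw [Finset.mem_add]
      refine ⟨x - x % d, hheadmem x hx, x % d, ?_, by ring⟩
      rw [Finset.mem_Icc]
      have h1 := Int.emod_nonneg x (show d ≠ 0 by omega)
      have h2 := Int.emod_lt_of_pos x hdpos
      omega
    · intro hx
      rw [Finset.mem_add] at hx
      obtain ⟨a₀, ha₀, t, ht, rfl⟩ := hx
      rw [Finset.mem_Icc] at ht
      rw [hA0mem] at ha₀
      have hf := hfull a₀ ha₀.1 t ht.1 (by omega)
      rwa [ha₀.2, sub_zero] at hf
  have hinjsum : ((A₀ ×ˢ Finset.Icc (0:ℤ) (d-1)) : Set (ℤ × ℤ)).InjOn (fun p => p.1 + p.2) := by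
    rintro ⟨a, t⟩ hat ⟨a', t'⟩ hat' hsum'
    obtain ⟨ha, ht⟩ := hat
    obtain ⟨ha', ht'⟩ := hat'
    simp only [Finset.mem_coe] at ha ht ha' ht'
    simp only at hsum'
    rw [Finset.mem_Icc] at ht ht'
    rw [hA0mem] at ha ha'
    have e1 : t = (a + t) % d := by
      obtain ⟨u, hu⟩ := Int.dvd_of_emod_eq_zero ha.2
      rw [hu, add_comm (d*u) t, Int.add_mul_emod_self_left,
        Int.emod_eq_of_lt ht.1 (by omega)]
    have e2 : t' = (a' + t') % d := by
      obtain ⟨u, hu⟩ := Int.dvd_of_emod_eq_zero ha'.2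
      rw [hu, add_comm (d*u) t', Int.add_mul_emod_self_left,
        Int.emod_eq_of_lt ht'.1 (by omega)]
    have htt : t = t' := by rw [e1, e2, hsum']
    have haa : a = a' := by omega
    rw [Prod.mk.injEq]
    exact ⟨haa, htt⟩
  have hcardA : α = A₀.card * d.toNat := by
    have hca := Finset.card_add_iff.2 hinjsum
    rw [← hAeq] at hca
    rw [← hcA, hca, Int.card_Icc]
    congr 1
    omega
  set dn : ℕ := d.toNat with hdn
  have hdZ : (dn : ℤ) = d := Int.toNat_of_nonneg (by omega)
  have hdn2 : 2 ≤ dn := by omega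
  set c : ℕ := A₀.card with hc
  have hαdiv : α / dn = c := by rw [hcardA]; exact Nat.mul_div_cancel _ (by omega)
  set A₁ : Finset ℤ := A₀.image (fun a => a / d) with hA₁
  set B₁ : Finset ℤ := B.image (fun b => b / d) with hB₁
  have hinjA : Set.InjOn (fun a : ℤ => a / d) A₀ := by
    intro a ha a' ha' heq
    simp only at heq
    have h1 : d ∣ a := Int.dvd_of_emod_eq_zero ((hA0mem a).1 (Finset.mem_coe.1 ha)).2
    have h1' : d ∣ a' := Int.dvd_of_emod_eq_zero ((hA0mem a').1 (Finset.mem_coe.1 ha')).2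
    calc a = d * (a/d) := (Int.mul_ediv_cancel' h1).symm
    _ = d * (a'/d) := by rw [heq]
    _ = a' := Int.mul_ediv_cancel' h1'
  have hinjB : Set.InjOn (fun b : ℤ => b / d) B := by
    intro b hb b' hb' heq
    simp only at heq
    have h1 : d ∣ b := hTB' b (Finset.mem_coe.1 hb)
    have h1' : d ∣ b' := hTB' b' (Finset.mem_coe.1 hb')
    calc b = d * (b/d) := (Int.mul_ediv_cancel' h1).symm
    _ = d * (b'/d) := by rw [heq]
    _ = b' := Int.mul_ediv_cancel' h1'
  have hcA₁ : A₁.card = c := by rw [hA₁]; exact Finset.card_image_of_injOn hinjA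
  have hcB₁ : B₁.card = β := by rw [hB₁, Finset.card_image_of_injOn hinjB, hcB]
  have hmeq : m = d * ((c * β : ℕ) : ℤ) := by
    rw [hm, hcardA]
    push_cast [← hdZ]
    ring
  have hsum₁ : A₁ + B₁ = Finset.Icc (0:ℤ) (((α/dn * β : ℕ) : ℤ) - 1) := by
    rw [hαdiv]
    ext x
    rw [Finset.mem_add, Finset.mem_Icc]
    constructor
    · rintro ⟨a₁, ha₁, b₁, hb₁, rfl⟩
      rw [hA₁, Finset.mem_image] at ha₁
      rw [hB₁, Finset.mem_image] at hb₁
      obtain ⟨a, ha, rfl⟩ := ha₁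
      obtain ⟨b, hb, rfl⟩ := hb₁
      have haA := ((hA0mem a).1 ha).1
      have hda : d ∣ a := Int.dvd_of_emod_eq_zero ((hA0mem a).1 ha).2
      have hdb : d ∣ b := hTB' b hb
      have hbound : 0 ≤ a + b ∧ a + b ≤ m - 1 := by
        have hmm : a + b ∈ A + B := Finset.add_mem_add haA hb
        rw [hsum, Finset.mem_Icc] at hmm; exact hmm
      obtain ⟨u, hu⟩ := hda
      obtain ⟨v, hv⟩ := hdb
      have hsum2 : a / d + b / d = u + v := by
        rw [hu, hv, Int.mul_ediv_cancel_left _ (show d ≠ 0 by omega),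
          Int.mul_ediv_cancel_left _ (show d ≠ 0 by omega)]
      rw [hsum2]
      constructor
      · have h1 : d * 0 ≤ d * (u + v) := by
          rw [mul_zero]
          calc (0:ℤ) ≤ a + b := hbound.1
          _ = d * (u + v) := by rw [hu, hv]; ring
        exact le_of_mul_le_mul_left h1 hdpos
      · have h1 : d * (u + v) < d * ((c * β : ℕ) : ℤ) := by
          calc d * (u + v) = a + b := by rw [hu, hv]; ring
          _ ≤ m - 1 := hbound.2
          _ < m := by omega
          _ = d * ((c * β : ℕ) : ℤ) := hmeq
        have := lt_of_mul_lt_mul_left h1 (by omega : (0:ℤ) ≤ d)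
        omega
    · rintro ⟨hx0', hx1'⟩
      have hy : 0 ≤ d * x ∧ d * x ≤ m - 1 := by
        constructor
        · exact mul_nonneg (by omega) hx0'
        · calc d * x ≤ d * (((c * β : ℕ) : ℤ) - 1) := by
                apply mul_le_mul_of_nonneg_left hx1' (by omega)
          _ = d * ((c * β : ℕ) : ℤ) - d := by ring
          _ ≤ m - 1 := by rw [hmeq]; omega
      obtain ⟨a, haA, b, hbB, hab⟩ := hrep (d*x) hy.1 hy.2
      have hdb : d ∣ b := hTB' b hbB
      have hda : d ∣ a := by
        have he : a = d * x - b := by omega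
        rw [he]; exact dvd_sub ⟨x, rfl⟩ hdb
      have haA₀ : a ∈ A₀ := (hA0mem a).2 ⟨haA, Int.emod_eq_zero_of_dvd hda⟩
      refine ⟨a / d, Finset.mem_image_of_mem _ haA₀, b / d, Finset.mem_image_of_mem _ hbB, ?_⟩
      obtain ⟨u, hu⟩ := hda
      obtain ⟨v, hv⟩ := hdb
      rw [hu, hv, Int.mul_ediv_cancel_left _ (show d ≠ 0 by omega),
        Int.mul_ediv_cancel_left _ (show d ≠ 0 by omega)]
      have he : d * (u + v) = d * x := by rw [← hab, hu, hv]; ring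
      exact mul_left_cancel₀ (show d ≠ 0 by omega) he
  have h0A₁ : (0:ℤ) ∈ A₁ := by
    have h00 : (0:ℤ) ∈ A₀ := (hA0mem 0).2 ⟨h0A, by simp⟩
    rw [hA₁]
    exact Finset.mem_image.2 ⟨0, h00, Int.zero_ediv d⟩
  have h0B₁ : (0:ℤ) ∈ B₁ := by
    rw [hB₁]
    exact Finset.mem_image.2 ⟨0, h0B, Int.zero_ediv d⟩
  have hsubA₁ : A₁ ⊆ Finset.Icc (0:ℤ) (((α/dn * β : ℕ) : ℤ) - 1) := by
    intro x hx
    have hmm : x + 0 ∈ A₁ + B₁ := Finset.add_mem_add hx h0B₁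
    rw [hsum₁] at hmm
    simpa using hmm
  have hsubB₁ : B₁ ⊆ Finset.Icc (0:ℤ) (((α/dn * β : ℕ) : ℤ) - 1) := by
    intro x hx
    have hmm : 0 + x ∈ A₁ + B₁ := Finset.add_mem_add h0A₁ hx
    rw [hsum₁] at hmm
    simpa using hmm
  have himA : A₁.image (fun x => d * x) = A₀ := by
    rw [hA₁, Finset.image_image]
    calc A₀.image ((fun x => d * x) ∘ (fun a => a / d)) = A₀.image id := by
          apply Finset.image_congr
          intro a ha
          exact Int.mul_ediv_cancel' (Int.dvd_of_emod_eq_zero ((hA0mem a).1 ha).2)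
    _ = A₀ := Finset.image_id
  have himB : B₁.image (fun x => d * x) = B := by
    rw [hB₁, Finset.image_image]
    calc B.image ((fun x => d * x) ∘ (fun b => b / d)) = B.image id := by
          apply Finset.image_congr
          intro b hb
          exact Int.mul_ediv_cancel' (hTB' b hb)
    _ = B := Finset.image_id
  refine ⟨dn, ?_, (A₁, B₁), ?_, ?_, ?_⟩
  · rw [Finset.mem_erase, Nat.mem_divisors]
    exact ⟨by omega, ⟨c, by rw [hcardA]; ring⟩, by omega⟩
  · rw [mem_tilF]
    exact ⟨hsubA₁, hsubB₁, hsum₁, hcA₁.trans hαdiv.symm, hcB₁⟩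
  · simp only [hdZ]
    rw [himA]
    exact hAeq
  · simp only [hdZ]
    rw [himB]

end reduce


section recursion

lemma tilF_card_one_right (α : ℕ) : (tilF α 1).card ≤ 1 := by
  have h : (tilF α 1).card ≤ (tilF 1 α).card := by
    apply Finset.card_le_card_of_injOn (fun p => (p.2, p.1))
    · exact fun p hp => tilF_swap hp
    · intro p _ q _ h
      have h1 := congrArg Prod.fst h
      have h2 := congrArg Prod.snd h
      exact Prod.ext h2 h1
  exact h.trans (tilF_card_one_left α)

lemma tilF_card_rec {α β : ℕ} (hα : 2 ≤ α) (hβ : 2 ≤ β) :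
    (tilF α β).card ≤ (∑ d ∈ α.divisors.erase 1, (tilF (α/d) β).card)
      + ∑ e ∈ β.divisors.erase 1, (tilF α (β/e)).card := by
  classical
  have hsub : tilF α β ⊆
      ((α.divisors.erase 1).biUnion (fun d => (tilF (α/d) β).image
          (fun q => (q.1.image (fun x => (d:ℤ) * x) + Finset.Icc (0:ℤ) ((d:ℤ)-1),
                     q.2.image (fun x => (d:ℤ) * x)))))
      ∪ ((β.divisors.erase 1).biUnion (fun e => (tilF α (β/e)).image
          (fun q => (q.1.image (fun x => (e:ℤ) * x),
                     q.2.image (fun x => (e:ℤ) * x) + Finset.Icc (0:ℤ) ((e:ℤ)-1))))) := by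
    intro p hp
    obtain ⟨A, B⟩ := p
    have hp' := mem_tilF.1 hp
    simp only at hp'
    obtain ⟨hAs, hBs, hsum, hcA, hcB⟩ := hp'
    have h4 : 4 ≤ α * β := by calc 4 = 2 * 2 := rfl
                                 _ ≤ α * β := Nat.mul_le_mul hα hβ
    have h1 : (1:ℤ) ∈ A ∨ (1:ℤ) ∈ B := by
      have hm1 : (1:ℤ) ∈ Finset.Icc (0:ℤ) ((α*β:ℕ) - 1) := by
        rw [Finset.mem_Icc]; omega
      rw [← hsum, Finset.mem_add] at hm1
      obtain ⟨a, ha, b, hb, hab⟩ := hm1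
      have ha' := Finset.mem_Icc.1 (hAs ha)
      have hb' := Finset.mem_Icc.1 (hBs hb)
      have : (a = 1 ∧ b = 0) ∨ (a = 0 ∧ b = 1) := by omega
      rcases this with ⟨h', h''⟩ | ⟨h', h''⟩
      · exact Or.inl (h' ▸ ha)
      · exact Or.inr (h'' ▸ hb)
    rw [Finset.mem_union]
    rcases h1 with h1A | h1B
    · left
      obtain ⟨d, hd, q, hq, hA, hB⟩ := reduceA (by omega) hβ hp h1A
      rw [Finset.mem_biUnion]
      exact ⟨d, hd, Finset.mem_image.2 ⟨q, hq, Prod.ext hA.symm hB.symm⟩⟩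
    · right
      have hswap : (B, A) ∈ tilF β α := tilF_swap hp
      obtain ⟨e, he, q, hq, hB, hA⟩ := reduceA (by omega) hα hswap h1B
      rw [Finset.mem_biUnion]
      refine ⟨e, he, Finset.mem_image.2 ⟨(q.2, q.1), tilF_swap hq, ?_⟩⟩
      exact Prod.ext hA.symm hB.symm
  calc (tilF α β).card ≤ _ := Finset.card_le_card hsub
  _ ≤ _ + _ := Finset.card_union_le _ _
  _ ≤ (∑ d ∈ α.divisors.erase 1, (tilF (α/d) β).card)
      + ∑ e ∈ β.divisors.erase 1, (tilF α (β/e)).card := by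
      apply add_le_add
      · exact Finset.card_biUnion_le.trans
          (Finset.sum_le_sum (fun d _ => Finset.card_image_le))
      · exact Finset.card_biUnion_le.trans
          (Finset.sum_le_sum (fun e _ => Finset.card_image_le))

def Dab (α β : ℕ) : ℕ := (α.divisors.card - 1) * (β.divisors.card - 1) + 1

lemma one_le_Dab (α β : ℕ) : 1 ≤ Dab α β := Nat.le_add_left 1 _

lemma Dab_le_left {α' α β : ℕ} (h : α' ∣ α) (hα : α ≠ 0) : Dab α' β ≤ Dab α β := by
  unfold Dab
  have hcc := Finset.card_le_card (Nat.divisors_subset_of_dvd hα h)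
  exact Nat.add_le_add_right (Nat.mul_le_mul_right _ (by omega)) 1

lemma Dab_le_right {β' α β : ℕ} (h : β' ∣ β) (hβ : β ≠ 0) : Dab α β' ≤ Dab α β := by
  unfold Dab
  have hcc := Finset.card_le_card (Nat.divisors_subset_of_dvd hβ h)
  exact Nat.add_le_add_right (Nat.mul_le_mul_left _ (by omega)) 1

lemma tilF_bound : ∀ m : ℕ, ∀ α β : ℕ, 1 ≤ α → 1 ≤ β → α * β = m →
    (tilF α β).card ≤ (Dab α β) ^ (Nat.log 2 m) := by
  intro m
  induction m using Nat.strong_induction_on with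
  | _ m ih =>
  intro α β hα hβ hm
  have hDpow : 1 ≤ Dab α β ^ Nat.log 2 m := Nat.one_le_pow _ _ (one_le_Dab α β)
  rcases eq_or_lt_of_le hα with hα1 | hα2
  · exact le_trans (by rw [← hα1]; exact tilF_card_one_left β) hDpow
  rcases eq_or_lt_of_le hβ with hβ1 | hβ2
  · exact le_trans (by rw [← hβ1]; exact tilF_card_one_right α) hDpow
  have h4 : 4 ≤ m := by
    rw [← hm]
    calc 4 = 2 * 2 := rfl
    _ ≤ α * β := Nat.mul_le_mul hα2 hβ2
  have hk : 1 ≤ Nat.log 2 m := Nat.log_pos (by omega) (by omega)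
  set k := Nat.log 2 m with hkdef
  set D := Dab α β with hD
  have key : ∀ (α' β' : ℕ), 1 ≤ α' → α' * β' < m → α' * β' ≤ m / 2 →
      Dab α' β' ≤ D → (tilF α' β').card ≤ D ^ (k - 1) := by
    intro α' β' hα' hlt hle hDle
    rcases Nat.eq_zero_or_pos β' with hb0 | hβ'
    · subst hb0
      have hempty : tilF α' 0 = ∅ := by
        rw [Finset.eq_empty_iff_forall_notMem]
        intro p hp
        obtain ⟨h1', _, _, h4', _⟩ := mem_tilF.1 hp
        have hIcc : Finset.Icc (0:ℤ) ((α'*0:ℕ) - 1) = ∅ := by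
          apply Finset.Icc_eq_empty
          simp
        rw [hIcc, Finset.subset_empty] at h1'
        rw [h1'] at h4'
        simp at h4'
        omega
      rw [hempty]
      simp
    have hIH := ih (α' * β') hlt α' β' hα' hβ' rfl
    refine hIH.trans ?_
    calc Dab α' β' ^ Nat.log 2 (α' * β') ≤ D ^ Nat.log 2 (α' * β') :=
          Nat.pow_le_pow_left hDle _
    _ ≤ D ^ (k - 1) := by
        apply Nat.pow_le_pow_right (one_le_Dab α β)
        calc Nat.log 2 (α' * β') ≤ Nat.log 2 (m / 2) := Nat.log_mono_right hle
        _ = k - 1 := Nat.log_div_base 2 m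
  have hsum1 : ∑ d ∈ α.divisors.erase 1, (tilF (α/d) β).card
      ≤ (α.divisors.card - 1) * D ^ (k-1) := by
    have hterm : ∀ d ∈ α.divisors.erase 1, (tilF (α/d) β).card ≤ D ^ (k-1) := by
      intro d hd
      rw [Finset.mem_erase, Nat.mem_divisors] at hd
      obtain ⟨hd1, hdvd, hα0⟩ := hd
      have hd0 : d ≠ 0 := by rintro rfl; exact hα0 (Nat.eq_zero_of_zero_dvd hdvd)
      have hd2 : 2 ≤ d := by omega
      have hαd : 1 ≤ α / d := Nat.div_pos (Nat.le_of_dvd (by omega) hdvd) (by omega)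
      have hhalf : α / d * β ≤ m / 2 := by
        have h1 : α / d ≤ α / 2 := Nat.div_le_div_left hd2 (by omega)
        calc α / d * β ≤ α / 2 * β := Nat.mul_le_mul_right _ h1
        _ ≤ m / 2 := by
            rw [Nat.le_div_iff_mul_le (by omega : 0 < 2), ← hm]
            calc α / 2 * β * 2 = α / 2 * 2 * β := by ring
            _ ≤ α * β := Nat.mul_le_mul_right _ (Nat.div_mul_le_self α 2)
      have hlt : α / d * β < m := by
        rw [← hm]
        exact (Nat.mul_lt_mul_right (by omega)).2 (Nat.div_lt_self (by omega) (by omega))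
      exact key (α/d) β hαd hlt hhalf
        (Dab_le_left ⟨d, (Nat.div_mul_cancel hdvd).symm ▸ (Nat.div_mul_cancel hdvd) ▸ rfl⟩ hα0)
    calc ∑ d ∈ α.divisors.erase 1, (tilF (α/d) β).card
        ≤ ∑ _d ∈ α.divisors.erase 1, D ^ (k-1) := Finset.sum_le_sum hterm
    _ = (α.divisors.erase 1).card * D ^ (k-1) := by
        rw [Finset.sum_const, smul_eq_mul]
    _ = (α.divisors.card - 1) * D ^ (k-1) := by
        rw [Finset.card_erase_of_mem (Nat.one_mem_divisors.2 (by omega))]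
  have hsum2 : ∑ e ∈ β.divisors.erase 1, (tilF α (β/e)).card
      ≤ (β.divisors.card - 1) * D ^ (k-1) := by
    have hterm : ∀ e ∈ β.divisors.erase 1, (tilF α (β/e)).card ≤ D ^ (k-1) := by
      intro e he
      rw [Finset.mem_erase, Nat.mem_divisors] at he
      obtain ⟨he1, hdvd, hβ0⟩ := he
      have he0 : e ≠ 0 := by rintro rfl; exact hβ0 (Nat.eq_zero_of_zero_dvd hdvd)
      have he2 : 2 ≤ e := by omega
      have hβe : 1 ≤ β / e := Nat.div_pos (Nat.le_of_dvd (by omega) hdvd) (by omega)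
      have hhalf : α * (β / e) ≤ m / 2 := by
        have h1 : β / e ≤ β / 2 := Nat.div_le_div_left he2 (by omega)
        calc α * (β / e) ≤ α * (β / 2) := Nat.mul_le_mul_left _ h1
        _ ≤ m / 2 := by
            rw [Nat.le_div_iff_mul_le (by omega : 0 < 2), ← hm]
            calc α * (β / 2) * 2 = α * (β / 2 * 2) := by ring
            _ ≤ α * β := Nat.mul_le_mul_left _ (Nat.div_mul_le_self β 2)
      have hlt : α * (β / e) < m := by
        rw [← hm]
        exact (Nat.mul_lt_mul_left (by omega)).2 (Nat.div_lt_self (by omega) (by omega))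
      exact key α (β/e) (by omega) hlt hhalf
        (Dab_le_right ⟨e, (Nat.div_mul_cancel hdvd).symm ▸ (Nat.div_mul_cancel hdvd) ▸ rfl⟩ hβ0)
    calc ∑ e ∈ β.divisors.erase 1, (tilF α (β/e)).card
        ≤ ∑ _e ∈ β.divisors.erase 1, D ^ (k-1) := Finset.sum_le_sum hterm
    _ = (β.divisors.erase 1).card * D ^ (k-1) := by
        rw [Finset.sum_const, smul_eq_mul]
    _ = (β.divisors.card - 1) * D ^ (k-1) := by
        rw [Finset.card_erase_of_mem (Nat.one_mem_divisors.2 (by omega))]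
  have hxy : (α.divisors.card - 1) + (β.divisors.card - 1) ≤ D := by
    have hx1 : 2 ≤ α.divisors.card := by
      apply Finset.one_lt_card.2
      exact ⟨1, Nat.one_mem_divisors.2 (by omega), α, Nat.mem_divisors_self α (by omega), by omega⟩
    have hy1 : 2 ≤ β.divisors.card := by
      apply Finset.one_lt_card.2
      exact ⟨1, Nat.one_mem_divisors.2 (by omega), β, Nat.mem_divisors_self β (by omega), by omega⟩
    rw [hD]
    unfold Dab
    set x := α.divisors.card - 1
    set y := β.divisors.card - 1
    have hx : 1 ≤ x := by omega
    have hy : 1 ≤ y := by omega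
    nlinarith
  calc (tilF α β).card
      ≤ (∑ d ∈ α.divisors.erase 1, (tilF (α/d) β).card)
        + ∑ e ∈ β.divisors.erase 1, (tilF α (β/e)).card := tilF_card_rec hα2 hβ2
  _ ≤ (α.divisors.card - 1) * D ^ (k-1) + (β.divisors.card - 1) * D ^ (k-1) :=
        add_le_add hsum1 hsum2
  _ = ((α.divisors.card - 1) + (β.divisors.card - 1)) * D ^ (k-1) := (add_mul _ _ _).symm
  _ ≤ D * D ^ (k-1) := Nat.mul_le_mul_right _ hxy
  _ = D ^ k := by
      rw [← pow_succ']
      congr 1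
      omega

end recursion

lemma canT1_card_le (α β : ℕ) (hα : 0 < α) (hβ : 0 < β) :
    Nat.card (CanT1 α (α*β)) ≤ (tilF α β).card := by
  classical
  set f : Finset ℤ × Finset ℤ → Finset ℤ × Finset ℤ :=
    fun p => (p.1.image (fun a => a + (-1)), p.2) with hf
  have hinj : Function.Injective f := by
    intro p q h
    have h1 := congrArg Prod.fst h
    have h2 := congrArg Prod.snd h
    simp only [hf] at h1 h2
    exact Prod.ext (Finset.image_injective (add_left_injective (-1)) h1) h2
  have himg : f '' (CanT1 α (α*β)) ⊆ ↑(tilF α β) := by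
    rintro _ ⟨p, hp, rfl⟩
    obtain ⟨hsum, hcA, hcard, h0B, hBnn⟩ := hp
    rw [Finset.mem_coe, mem_tilF]
    have hcIcc : (Finset.Icc (1:ℤ) ((α*β:ℕ):ℤ)).card = α*β := by
      rw [Int.card_Icc]; omega
    have hcB : p.2.card = β := by
      rw [hcIcc, hcA] at hcard
      exact (Nat.eq_of_mul_eq_mul_left hα hcard).symm
    have hAsub : ∀ a ∈ p.1, 1 ≤ a ∧ a ≤ ((α*β:ℕ):ℤ) := by
      intro a ha
      have h' : a + 0 ∈ p.1 + p.2 := Finset.add_mem_add ha h0B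
      rw [hsum] at h'
      rw [add_zero] at h'
      exact Finset.mem_Icc.1 h'
    have hAne : p.1.Nonempty := Finset.card_pos.1 (by rw [hcA]; omega)
    obtain ⟨a₀, ha₀⟩ := hAne
    have hBsub : ∀ b ∈ p.2, 0 ≤ b ∧ b ≤ ((α*β:ℕ):ℤ) - 1 := by
      intro b hb
      have h' : a₀ + b ∈ p.1 + p.2 := Finset.add_mem_add ha₀ hb
      rw [hsum, Finset.mem_Icc] at h'
      have h₀ := hAsub a₀ ha₀
      exact ⟨hBnn b hb, by omega⟩
    have hsum' : p.1.image (fun a => a + (-1)) + p.2 = Finset.Icc (0:ℤ) ((α*β:ℕ) - 1) := by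
      ext x
      rw [Finset.mem_add, Finset.mem_Icc]
      constructor
      · rintro ⟨a', ha', b, hb, rfl⟩
        rw [Finset.mem_image] at ha'
        obtain ⟨a, ha, rfl⟩ := ha'
        have h1 := hAsub a ha
        have h2 : a + b ∈ p.1 + p.2 := Finset.add_mem_add ha hb
        rw [hsum, Finset.mem_Icc] at h2
        omega
      · rintro ⟨hx0, hx1⟩
        have h' : x + 1 ∈ p.1 + p.2 := by
          rw [hsum, Finset.mem_Icc]; omega
        rw [Finset.mem_add] at h'
        obtain ⟨a, ha, b, hb, hab⟩ := h'
        exact ⟨a + (-1), Finset.mem_image_of_mem _ ha, b, hb, by omega⟩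
    refine ⟨?_, ?_, hsum', ?_, hcB⟩
    · intro x hx
      rw [Finset.mem_image] at hx
      obtain ⟨a, ha, rfl⟩ := hx
      have := hAsub a ha
      rw [Finset.mem_Icc]
      omega
    · intro b hb
      have := hBsub b hb
      rw [Finset.mem_Icc]
      omega
    · rw [Finset.card_image_of_injective _ (add_left_injective (-1)), hcA]
  calc Nat.card (CanT1 α (α*β)) = (CanT1 α (α*β)).ncard := Nat.card_coe_set_eq _
  _ = (f '' (CanT1 α (α*β))).ncard := (Set.ncard_image_of_injOn (hinj.injOn)).symm
  _ ≤ (↑(tilF α β) : Set (Finset ℤ × Finset ℤ)).ncard :=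
      Set.ncard_le_ncard himg (Finset.finite_toSet _)
  _ = (tilF α β).card := Set.ncard_coe_finset _


/-- Upper bound: `|T(α,[n])| ≤ (σ₀(α)·σ₀(β) − σ₀(α) − σ₀(β) + 2)^(log₂ n)` when
`α·β = n`. -/
theorem tilings_upper_bound (n α β : ℕ) (hα : 0 < α) (hβ : 0 < β) (h : α * β = n) :
    (Nat.card (CanT1 α n) : ℝ) ≤
      ((α.divisors.card : ℝ) * (β.divisors.card : ℝ) - (α.divisors.card : ℝ) -
        (β.divisors.card : ℝ) + 2) ^ Real.logb 2 (n : ℝ) := by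
  subst h
  have hcard := (canT1_card_le α β hα hβ).trans (tilF_bound (α*β) α β hα hβ rfl)
  have ha1 : 1 ≤ α.divisors.card :=
    Finset.card_pos.2 ⟨α, Nat.mem_divisors_self α (by omega)⟩
  have hb1 : 1 ≤ β.divisors.card :=
    Finset.card_pos.2 ⟨β, Nat.mem_divisors_self β (by omega)⟩
  obtain ⟨x, hx⟩ : ∃ x, α.divisors.card = x + 1 := ⟨α.divisors.card - 1, by omega⟩
  obtain ⟨y, hy⟩ : ∃ y, β.divisors.card = y + 1 := ⟨β.divisors.card - 1, by omega⟩
  have hRHSeq : ((α.divisors.card : ℝ) * (β.divisors.card : ℝ) - (α.divisors.card : ℝ) -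
      (β.divisors.card : ℝ) + 2) = ((Dab α β : ℕ) : ℝ) := by
    unfold Dab
    rw [hx, hy]
    simp only [Nat.add_sub_cancel]
    push_cast
    ring
  rw [hRHSeq]
  have hD1 : (1:ℝ) ≤ ((Dab α β : ℕ) : ℝ) := by
    exact_mod_cast one_le_Dab α β
  calc (Nat.card (CanT1 α (α*β)) : ℝ)
      ≤ ((Dab α β : ℕ) : ℝ) ^ (Nat.log 2 (α*β)) := by exact_mod_cast hcard
  _ = ((Dab α β : ℕ) : ℝ) ^ ((Nat.log 2 (α*β) : ℕ) : ℝ) := (Real.rpow_natCast _ _).symm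
  _ ≤ ((Dab α β : ℕ) : ℝ) ^ Real.logb 2 ((α*β : ℕ) : ℝ) := by
      apply Real.rpow_le_rpow_of_exponent_le hD1
      exact Real.natLog_le_logb (α*β) 2
end
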